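/- arXiv:1605.03276 — 9 statements merged into one kernel-verified Lean document; each statement's English description precedes it below -/
import Mathlib

section
/- Let Γ be a one-ended rooted tree with levels, J a Jacobi operator on Γ with positive off-diagonal coefficients λ_x and real diagonal coefficients β_x, and z a nonreal complex number. If v : Γ → ℂ satisfies the eigenvalue equation Jv = zv on all of Γ and v(x) = 0 at some vertex x, then v vanishes identically on Γ. -/
/-- A one-ended levelled tree: every vertex `x` has a unique upward neighbor
`parent x` (written `x'`) one level up, and a finite set `children x` of
downward neighbors one level down; the tree is connected with one end. -/
structure JTree where
  V : Type
  parent : V → V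
  level : V → ℕ
  level_parent : ∀ x, level (parent x) = level x + 1
  children : V → Finset V
  mem_children : ∀ x y : V, y ∈ children x ↔ parent y = x
  connected : ∀ x y : V, ∃ k l : ℕ, parent^[k] x = parent^[l] y
  subtree_finite : ∀ x : V, {t : V | ∃ k : ℕ, parent^[k] t = x}.Finite

namespace JTree

variable (T : JTree)

/-- `T.descend t x` means `t` belongs to the finite subtree `Γ_x` below (and
including) the vertex `x`. -/
def descend (t x : T.V) : Prop := ∃ k : ℕ, T.parent^[k] t = x

/-- The Jacobi operator on the tree:
`(Jv)(x) = λ_x v(x') + β_x v(x) + Σ_{y ∈ N_x} λ_y v(y)`. -/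
noncomputable def jacobi (lam beta : T.V → ℝ) (v : T.V → ℂ) (x : T.V) : ℂ :=
  (lam x : ℂ) * v (T.parent x) + (beta x : ℂ) * v x +
    ∑ y ∈ T.children x, (lam y : ℂ) * v y

end JTree

lemma JTree.level_iterate (T : JTree) (t : T.V) (k : ℕ) :
    T.level (T.parent^[k] t) = T.level t + k := by
  induction k with
  | zero => simp
  | succ k ih => rw [Function.iterate_succ_apply', T.level_parent, ih]; omega

private lemma im_pair_aux (r : ℝ) (a b : ℂ) :
    ((starRingEnd ℂ) a * ((r : ℂ) * b) + (starRingEnd ℂ) b * ((r : ℂ) * a)).im = 0 := by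
  simp [Complex.add_im, Complex.mul_im, Complex.mul_re]
  ring

private lemma im_diag_aux (r : ℝ) (a : ℂ) :
    ((starRingEnd ℂ) a * ((r : ℂ) * a)).im = 0 := by
  simp [Complex.mul_im, Complex.mul_re]
  ring

lemma JTree.zero_on_subtree (T : JTree) (lam beta : T.V → ℝ)
    (z : ℂ) (hz : z.im ≠ 0) (v : T.V → ℂ)
    (hv : ∀ t, T.jacobi lam beta v t = z * v t)
    (x : T.V) (hx : v x = 0) : ∀ t, T.descend t x → v t = 0 := by
  classical
  set S : Finset T.V := (T.subtree_finite x).toFinset with hS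
  have hmem : ∀ t, t ∈ S ↔ ∃ k : ℕ, T.parent^[k] t = x := by
    intro t; simp [hS, Set.Finite.mem_toFinset]
  have hxS : x ∈ S := (hmem x).2 ⟨0, rfl⟩
  have hchild : ∀ t ∈ S, ∀ y ∈ T.children t, y ∈ S ∧ y ≠ x := by
    intro t ht y hy
    obtain ⟨k, hk⟩ := (hmem t).1 ht
    have hpy : T.parent y = t := (T.mem_children t y).1 hy
    have hyS : y ∈ S := (hmem y).2 ⟨k + 1, by
      rw [Function.iterate_succ_apply, hpy, hk]⟩
    refine ⟨hyS, ?_⟩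
    rintro rfl
    have h1 : T.parent^[k+1] y = y := by
      rw [Function.iterate_succ_apply, hpy, hk]
    have h2 := congrArg T.level h1
    rw [T.level_iterate] at h2
    omega
  have herase : S.erase x = S.biUnion T.children := by
    ext y
    simp only [Finset.mem_erase, Finset.mem_biUnion]
    constructor
    · rintro ⟨hyx, hyS⟩
      obtain ⟨k, hk⟩ := (hmem y).1 hyS
      cases k with
      | zero => exact absurd hk hyx
      | succ k =>
        refine ⟨T.parent y, ?_, (T.mem_children _ y).2 rfl⟩
        exact (hmem _).2 ⟨k, by rw [← Function.iterate_succ_apply]; exact hk⟩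
    · rintro ⟨t, ht, hy⟩
      obtain ⟨hyS, hyx⟩ := hchild t ht y hy
      exact ⟨hyx, hyS⟩
  have hdisj : (S : Set T.V).PairwiseDisjoint T.children := by
    intro a _ b _ hab
    refine Finset.disjoint_left.2 fun y hya hyb => hab ?_
    rw [← (T.mem_children a y).1 hya, ← (T.mem_children b y).1 hyb]
  -- the quadratic form
  have key : (∑ t ∈ S, (starRingEnd ℂ) (v t) * T.jacobi lam beta v t) =
      z * ∑ t ∈ S, (Complex.normSq (v t) : ℂ) := by
    rw [Finset.mul_sum]
    refine Finset.sum_congr rfl fun t _ => ?_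
    rw [hv t, Complex.normSq_eq_conj_mul_self]
    ring
  have hsplit : (∑ t ∈ S, (starRingEnd ℂ) (v t) * T.jacobi lam beta v t) =
      (∑ t ∈ S, (starRingEnd ℂ) (v t) * ((lam t : ℂ) * v (T.parent t)))
      + (∑ t ∈ S, (starRingEnd ℂ) (v t) * ((beta t : ℂ) * v t))
      + ∑ t ∈ S, ∑ y ∈ T.children t, (starRingEnd ℂ) (v t) * ((lam y : ℂ) * v y) := by
    simp only [JTree.jacobi, mul_add, Finset.sum_add_distrib, Finset.mul_sum]
  have hC : (∑ t ∈ S, ∑ y ∈ T.children t, (starRingEnd ℂ) (v t) * ((lam y : ℂ) * v y))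
      = ∑ y ∈ S.erase x, (starRingEnd ℂ) (v (T.parent y)) * ((lam y : ℂ) * v y) := by
    rw [herase, Finset.sum_biUnion hdisj]
    refine Finset.sum_congr rfl fun t _ => Finset.sum_congr rfl fun y hy => ?_
    rw [(T.mem_children t y).1 hy]
  have hA : (∑ t ∈ S, (starRingEnd ℂ) (v t) * ((lam t : ℂ) * v (T.parent t)))
      = ∑ t ∈ S.erase x, (starRingEnd ℂ) (v t) * ((lam t : ℂ) * v (T.parent t)) := by
    rw [← Finset.add_sum_erase S _ hxS, hx]
    simp
  have him0 : (∑ t ∈ S, (starRingEnd ℂ) (v t) * T.jacobi lam beta v t).im = 0 := by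
    rw [hsplit, hC, hA, Complex.add_im, Complex.add_im,
      Complex.im_sum, Complex.im_sum, Complex.im_sum]
    have e2 : (∑ t ∈ S, ((starRingEnd ℂ) (v t) * ((beta t : ℂ) * v t)).im) = 0 :=
      Finset.sum_eq_zero fun t _ => im_diag_aux (beta t) (v t)
    have e13 : (∑ t ∈ S.erase x, ((starRingEnd ℂ) (v t) * ((lam t : ℂ) * v (T.parent t))).im)
        + (∑ t ∈ S.erase x, ((starRingEnd ℂ) (v (T.parent t)) * ((lam t : ℂ) * v t)).im) = 0 := by
      rw [← Finset.sum_add_distrib]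
      refine Finset.sum_eq_zero fun t _ => ?_
      have h := im_pair_aux (lam t) (v t) (v (T.parent t))
      rw [Complex.add_im] at h
      exact h
    linarith
  have hsum0 : (∑ t ∈ S, Complex.normSq (v t)) = 0 := by
    have hr : (∑ t ∈ S, (Complex.normSq (v t) : ℂ)) =
        ((∑ t ∈ S, Complex.normSq (v t) : ℝ) : ℂ) := by push_cast; ring
    rw [key, hr, Complex.mul_im] at him0
    simp only [Complex.ofReal_re, Complex.ofReal_im, mul_zero, zero_add] at him0
    exact (mul_eq_zero.1 him0).resolve_left hz
  have hall : ∀ t ∈ S, Complex.normSq (v t) = 0 := by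
    intro t ht
    have := (Finset.sum_eq_zero_iff_of_nonneg
      (fun t _ => Complex.normSq_nonneg (v t))).1 hsum0
    exact this t ht
  intro t ht
  exact Complex.normSq_eq_zero.1 (hall t ((hmem t).2 ht))

/-- If `v` solves the eigenvalue equation `Jv = zv` on all of `Γ` for a nonreal `z`
and vanishes at some vertex, then `v` vanishes identically. -/
theorem stmt_1 (T : JTree) (lam beta : T.V → ℝ) (hlam : ∀ t, 0 < lam t)
    (z : ℂ) (hz : z.im ≠ 0) (v : T.V → ℂ)
    (hv : ∀ t, T.jacobi lam beta v t = z * v t)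
    (x : T.V) (hx : v x = 0) : ∀ t, v t = 0 := by
  have hup : ∀ k, v (T.parent^[k] x) = 0 := by
    intro k
    induction k with
    | zero => exact hx
    | succ k ih =>
      set w := T.parent^[k] x with hw
      have hsub := T.zero_on_subtree lam beta z hz v hv w ih
      have heq := hv w
      rw [JTree.jacobi] at heq
      have hch : ∀ y ∈ T.children w, (lam y : ℂ) * v y = 0 := by
        intro y hy
        have : v y = 0 := hsub y ⟨1, by simpa using (T.mem_children w y).1 hy⟩
        rw [this, mul_zero]
      rw [Finset.sum_eq_zero hch, ih] at heq
      have h0 : (lam w : ℂ) * v (T.parent w) = 0 := by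
        simpa using heq
      have hlw : (lam w : ℂ) ≠ 0 := by exact_mod_cast (hlam w).ne'
      rw [Function.iterate_succ_apply']
      exact (mul_eq_zero.1 h0).resolve_left hlw
  intro t
  obtain ⟨k, l, hkl⟩ := T.connected t x
  exact T.zero_on_subtree lam beta z hz v hv (T.parent^[l] x) (hup l) t ⟨k, hkl⟩
end

section
/- For a Jacobi operator J on a one-ended levelled tree Γ and any nonreal z, the space of functions v : Γ → ℂ satisfying (Jv)(x) = z v(x) for all x ∈ Γ is at most one-dimensional; consequently the defect indices of J (as a symmetric operator on finitely supported functions in ℓ²(Γ)) are at most 1. -/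
namespace Aux
open JTree
variable (T : JTree)

open scoped Classical

noncomputable def gam (x : T.V) : Finset T.V := (T.subtree_finite x).toFinset

lemma mem_gam {t x : T.V} : t ∈ gam T x ↔ ∃ k : ℕ, T.parent^[k] t = x := by
  simp [gam]

lemma level_iter (k : ℕ) (t : T.V) : T.level (T.parent^[k] t) = T.level t + k := by
  induction k with
  | zero => simp
  | succ n ih => rw [Function.iterate_succ_apply', T.level_parent, ih]; omega

lemma level_le_of_mem {t x : T.V} (h : t ∈ gam T x) : T.level t ≤ T.level x := by
  obtain ⟨k, hk⟩ := (mem_gam T).1 h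
  have := level_iter T k t
  rw [hk] at this
  omega

lemma gam_eq (x : T.V) :
    gam T x = insert x ((T.children x).biUnion (gam T)) := by
  ext t
  simp only [mem_gam, Finset.mem_insert, Finset.mem_biUnion, T.mem_children]
  constructor
  · rintro ⟨k, hk⟩
    cases k with
    | zero => exact Or.inl (by simpa using hk)
    | succ n =>
      right
      refine ⟨T.parent^[n] t, ?_, n, rfl⟩
      rwa [Function.iterate_succ_apply'] at hk
  · rintro (rfl | ⟨y, hy, k, rfl⟩)
    · exact ⟨0, rfl⟩
    · exact ⟨k + 1, by rw [Function.iterate_succ_apply', hy]⟩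

lemma not_mem_biUnion (x : T.V) :
    x ∉ (T.children x).biUnion (gam T) := by
  simp only [Finset.mem_biUnion]
  rintro ⟨y, hy, hx⟩
  have h1 := level_le_of_mem T hx
  have h2 : T.level (T.parent y) = T.level y + 1 := T.level_parent y
  rw [(T.mem_children x y).1 hy] at h2
  omega

lemma sum_gam (f : T.V → ℂ) (x : T.V) :
    ∑ t ∈ gam T x, f t = f x + ∑ y ∈ T.children x, ∑ t ∈ gam T y, f t := by
  rw [gam_eq, Finset.sum_insert (not_mem_biUnion T x), Finset.sum_biUnion]
  intro y1 h1 y2 h2 hne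
  simp only [Finset.mem_coe] at h1 h2
  refine Finset.disjoint_left.2 fun t ht1 ht2 => hne ?_
  obtain ⟨k1, hk1⟩ := (mem_gam T).1 ht1
  obtain ⟨k2, hk2⟩ := (mem_gam T).1 ht2
  have l1 := level_iter T k1 t
  have l2 := level_iter T k2 t
  rw [hk1] at l1; rw [hk2] at l2
  have e1 : T.level (T.parent y1) = T.level y1 + 1 := T.level_parent y1
  have e2 : T.level (T.parent y2) = T.level y2 + 1 := T.level_parent y2
  rw [(T.mem_children x y1).1 h1] at e1
  rw [(T.mem_children x y2).1 h2] at e2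
  have : k1 = k2 := by omega
  rw [← hk1, ← hk2, this]

lemma gam_subset {x y : T.V} (hy : y ∈ T.children x) : gam T y ⊆ gam T x := by
  intro t ht
  obtain ⟨k, hk⟩ := (mem_gam T).1 ht
  exact (mem_gam T).2 ⟨k + 1, by rw [Function.iterate_succ_apply', hk,
    (T.mem_children x y).1 hy]⟩

lemma card_lt {x y : T.V} (hy : y ∈ T.children x) :
    (gam T y).card < (gam T x).card := by
  refine Finset.card_lt_card ⟨gam_subset T hy, fun hsub => ?_⟩
  have hx : x ∈ gam T x := (mem_gam T).2 ⟨0, rfl⟩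
  have := not_mem_biUnion T x
  simp only [Finset.mem_biUnion] at this
  exact this ⟨y, hy, hsub hx⟩

lemma green (lam beta : T.V → ℝ) (u v : T.V → ℂ) :
    ∀ n (x : T.V), (gam T x).card = n →
    ∑ t ∈ gam T x, (u t * T.jacobi lam beta v t - v t * T.jacobi lam beta u t)
      = (lam x : ℂ) * (u x * v (T.parent x) - v x * u (T.parent x)) := by
  intro n
  induction n using Nat.strong_induction_on with
  | _ n ih =>
    intro x hx
    rw [sum_gam]
    have hchild : ∀ y ∈ T.children x,
        ∑ t ∈ gam T y, (u t * T.jacobi lam beta v t - v t * T.jacobi lam beta u t)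
          = (lam y : ℂ) * (u y * v x - v y * u x) := by
      intro y hy
      rw [ih _ (hx ▸ card_lt T hy) y rfl, (T.mem_children x y).1 hy]
    rw [Finset.sum_congr rfl hchild]
    simp only [jacobi]
    have key : ∑ y ∈ T.children x, (lam y : ℂ) * (u y * v x - v y * u x)
        = v x * (∑ y ∈ T.children x, (lam y : ℂ) * u y)
          - u x * (∑ y ∈ T.children x, (lam y : ℂ) * v y) := by
      rw [Finset.mul_sum, Finset.mul_sum, ← Finset.sum_sub_distrib]
      exact Finset.sum_congr rfl fun y _ => by ring
    rw [key]; ring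

/-- Wronskian of two solutions vanishes on every edge. -/
lemma wronskian (lam beta : T.V → ℝ) (hlam : ∀ t, 0 < lam t) (z : ℂ)
    (v w : T.V → ℂ)
    (hv : ∀ t, T.jacobi lam beta v t = z * v t)
    (hw : ∀ t, T.jacobi lam beta w t = z * w t) (x : T.V) :
    w x * v (T.parent x) = v x * w (T.parent x) := by
  have h := green T lam beta w v _ x rfl
  have h0 : ∑ t ∈ gam T x, (w t * T.jacobi lam beta v t - v t * T.jacobi lam beta w t)
      = 0 := by
    refine Finset.sum_eq_zero fun t _ => ?_
    rw [hv, hw]; ring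
  rw [h0] at h
  have hlx : (lam x : ℂ) ≠ 0 := Complex.ofReal_ne_zero.mpr (hlam x).ne'
  have := (mul_eq_zero.1 h.symm).resolve_left hlx
  linear_combination this

/-- If a solution vanishes at `x`, it vanishes on all of `Γ_x`. -/
lemma vanish_on_subtree (lam beta : T.V → ℝ) (hlam : ∀ t, 0 < lam t) (z : ℂ)
    (hz : z.im ≠ 0) (v : T.V → ℂ)
    (hv : ∀ t, T.jacobi lam beta v t = z * v t) (x : T.V) (hx : v x = 0) :
    ∀ t ∈ gam T x, v t = 0 := by
  set u : T.V → ℂ := fun t => (starRingEnd ℂ) (v t) with hu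
  have hju : ∀ t, T.jacobi lam beta u t = (starRingEnd ℂ) z * u t := by
    intro t
    have : T.jacobi lam beta u t = (starRingEnd ℂ) (T.jacobi lam beta v t) := by
      simp [jacobi, hu, map_add, map_mul, map_sum, Complex.conj_ofReal]
    rw [this, hv, map_mul]
  have h := green T lam beta u v _ x rfl
  have h0 : ∑ t ∈ gam T x, (u t * T.jacobi lam beta v t - v t * T.jacobi lam beta u t)
      = (z - (starRingEnd ℂ) z) * ∑ t ∈ gam T x, (Complex.normSq (v t) : ℂ) := by
    rw [Finset.mul_sum]
    refine Finset.sum_congr rfl fun t _ => ?_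
    rw [hv, hju, hu]
    simp only [Complex.normSq_eq_conj_mul_self]
    push_cast
    ring
  have hux : u x = 0 := by rw [hu]; simp [hx]
  rw [h0, hx, hux] at h
  simp only [zero_mul, mul_zero, sub_zero, zero_sub, mul_neg, neg_zero] at h
  have hzc : z - (starRingEnd ℂ) z ≠ 0 := by
    rw [sub_ne_zero]
    intro hc
    exact hz ((Complex.conj_eq_iff_im.1 hc.symm))
  have hsum : ∑ t ∈ gam T x, (Complex.normSq (v t) : ℂ) = 0 := by
    rcases mul_eq_zero.1 h with h' | h'
    · exact absurd h' hzc
    · exact h'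
  have hsumR : ∑ t ∈ gam T x, Complex.normSq (v t) = 0 := by
    have := congrArg Complex.re hsum
    simpa [Complex.ofReal_sum] using this
  intro t ht
  have := (Finset.sum_eq_zero_iff_of_nonneg
    (fun t _ => Complex.normSq_nonneg (v t))).1 hsumR t ht
  exact Complex.normSq_eq_zero.1 this

lemma vanish_parent (lam beta : T.V → ℝ) (hlam : ∀ t, 0 < lam t) (z : ℂ)
    (hz : z.im ≠ 0) (v : T.V → ℂ)
    (hv : ∀ t, T.jacobi lam beta v t = z * v t) (x : T.V) (hx : v x = 0) :
    v (T.parent x) = 0 := by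
  have heq := hv x
  have hch : ∀ y ∈ T.children x, (lam y : ℂ) * v y = 0 := by
    intro y hy
    have : v y = 0 := vanish_on_subtree T lam beta hlam z hz v hv x hx y
      ((mem_gam T).2 ⟨1, by simpa using (T.mem_children x y).1 hy⟩)
    rw [this, mul_zero]
  rw [jacobi, hx, Finset.sum_eq_zero hch] at heq
  simp only [mul_zero, add_zero] at heq
  have hlx : (lam x : ℂ) ≠ 0 := Complex.ofReal_ne_zero.mpr (hlam x).ne'
  exact (mul_eq_zero.1 heq).resolve_left hlx

lemma vanish_everywhere (lam beta : T.V → ℝ) (hlam : ∀ t, 0 < lam t) (z : ℂ)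
    (hz : z.im ≠ 0) (v : T.V → ℂ)
    (hv : ∀ t, T.jacobi lam beta v t = z * v t) (x : T.V) (hx : v x = 0)
    (t : T.V) : v t = 0 := by
  obtain ⟨k, l, hkl⟩ := T.connected t x
  have hpl : v (T.parent^[l] x) = 0 := by
    clear hkl
    induction l with
    | zero => simpa using hx
    | succ n ihn =>
      rw [Function.iterate_succ_apply']
      exact vanish_parent T lam beta hlam z hz v hv _ ihn
  exact vanish_on_subtree T lam beta hlam z hz v hv _ hpl t ((mem_gam T).2 ⟨k, hkl⟩)

end Aux

/-- For nonreal `z` the space of solutions of `Jv = zv` is at most one-dimensional: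
any two solutions are proportional; hence the defect indices of `J` are at most 1. -/
theorem stmt_3 (T : JTree) (lam beta : T.V → ℝ) (hlam : ∀ t, 0 < lam t)
    (z : ℂ) (hz : z.im ≠ 0) (v w : T.V → ℂ)
    (hv : ∀ t, T.jacobi lam beta v t = z * v t)
    (hw : ∀ t, T.jacobi lam beta w t = z * w t)
    (hv0 : ∃ t, v t ≠ 0) :
    ∃ c : ℂ, ∀ t, w t = c * v t := by
  obtain ⟨t0, ht0⟩ := hv0
  have hvne : ∀ x, v x ≠ 0 := fun x hx =>
    ht0 (Aux.vanish_everywhere T lam beta hlam z hz v hv x hx t0)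
  have hstep : ∀ x, w x / v x = w (T.parent x) / v (T.parent x) := by
    intro x
    rw [div_eq_div_iff (hvne x) (hvne _)]
    linear_combination Aux.wronskian T lam beta hlam z v w hv hw x
  have hiter : ∀ k (x : T.V),
      w (T.parent^[k] x) / v (T.parent^[k] x) = w x / v x := by
    intro k
    induction k with
    | zero => simp
    | succ n ih =>
      intro x
      rw [Function.iterate_succ_apply', ← hstep, ih]
  refine ⟨w t0 / v t0, fun t => ?_⟩
  obtain ⟨k, l, hkl⟩ := T.connected t t0
  have hr : w t / v t = w t0 / v t0 := by rw [← hiter k t, hkl, hiter l t0]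
  rw [div_eq_div_iff (hvne t) (hvne t0)] at hr
  field_simp
  linear_combination hr
end

section
/- Let J be a Jacobi operator on a one-ended levelled tree Γ with β ≡ 0 (symmetric case), and suppose v satisfies Jv = iv on Γ with v(x_0) = 1 at a vertex x_0 on level 0. Then the function ṽ(x) = i^{−ℓ(x)} v(x) is real and strictly positive on Γ. -/
/-- For a symmetric Jacobi operator (`β ≡ 0`), if `Jv = i v` with `v(x₀) = 1` at a
level-zero vertex `x₀`, then `ṽ(x) = i^{-ℓ(x)} v(x)` is real and strictly positive. -/
theorem stmt_4 (T : JTree) (lam : T.V → ℝ) (hlam : ∀ t, 0 < lam t)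
    (v : T.V → ℂ)
    (hv : ∀ t, T.jacobi lam (fun _ => 0) v t = Complex.I * v t)
    (x₀ : T.V) (hx₀ : T.level x₀ = 0) (hv1 : v x₀ = 1)
    (hnv : ∀ t, v t ≠ 0)
    (huniq : ∀ w : T.V → ℂ,
      (∀ t, T.jacobi lam (fun _ => 0) w t = Complex.I * w t) →
      ∃ c : ℂ, ∀ t, w t = c * v t) :
    ∀ t, ∃ r : ℝ, 0 < r ∧ (Complex.I ^ T.level t)⁻¹ * v t = (r : ℂ) := by
  classical
  -- simplified eigenvalue equation
  have key : ∀ t, (lam t : ℂ) * v (T.parent t) + ∑ y ∈ T.children t, (lam y : ℂ) * v y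
      = Complex.I * v t := by
    intro t
    have h := hv t
    simp only [JTree.jacobi, Complex.ofReal_zero, zero_mul, add_zero] at h
    simpa using h
  -- conjugation symmetry: w t = (-1)^{level t} conj (v t) is also a solution
  set conjv : T.V → ℂ := fun t => (-1 : ℂ) ^ T.level t * (starRingEnd ℂ) (v t) with hconjv
  have hw : ∀ t, T.jacobi lam (fun _ => 0) conjv t = Complex.I * conjv t := by
    intro t
    have hck := congrArg (starRingEnd ℂ) (key t)
    simp only [map_add, map_mul, map_sum, Complex.conj_ofReal, Complex.conj_I] at hck
    simp only [JTree.jacobi, hconjv, Complex.ofReal_zero, zero_mul, add_zero,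
      T.level_parent t]
    have hsum : ∑ y ∈ T.children t,
        (lam y : ℂ) * ((-1 : ℂ) ^ T.level y * (starRingEnd ℂ) (v y))
        = (-(-1 : ℂ) ^ T.level t) * ∑ y ∈ T.children t, (lam y : ℂ) * (starRingEnd ℂ) (v y) := by
      rw [Finset.mul_sum]
      refine Finset.sum_congr rfl fun y hy => ?_
      have hpy : T.parent y = t := (T.mem_children t y).1 hy
      have hl : T.level t = T.level y + 1 := by rw [← hpy, T.level_parent]
      rw [hl]; ring
    rw [hsum]
    linear_combination (-(-1 : ℂ) ^ T.level t) * hck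
  obtain ⟨c, hc⟩ := huniq conjv hw
  have hc1 : c = 1 := by
    have := hc x₀
    simp [hconjv, hx₀, hv1] at this
    simpa using this.symm
  have hA : ∀ t, (-1 : ℂ) ^ T.level t * (starRingEnd ℂ) (v t) = v t := by
    intro t
    have := hc t
    rw [hc1, one_mul] at this
    simpa [hconjv] using this
  -- the real function r
  set r : T.V → ℝ := fun t => ((Complex.I ^ T.level t)⁻¹ * v t).re with hrdef
  have hB : ∀ t, (Complex.I ^ T.level t)⁻¹ * v t = (r t : ℂ) := by
    intro t
    have hconj : (starRingEnd ℂ) ((Complex.I ^ T.level t)⁻¹ * v t)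
        = (Complex.I ^ T.level t)⁻¹ * v t := by
      rw [map_mul, map_inv₀, map_pow, Complex.conj_I]
      have : ((-Complex.I) ^ T.level t)⁻¹ = (-1 : ℂ) ^ T.level t * (Complex.I ^ T.level t)⁻¹ := by
        rw [neg_pow, mul_inv]
        congr 1
        rw [← inv_pow]
        norm_num
      rw [this, mul_assoc, mul_comm ((Complex.I ^ T.level t)⁻¹), ← mul_assoc, hA t]
      exact mul_comm _ _
    exact (Complex.conj_eq_iff_re.1 hconj) ▸ rfl
  have hIne : ∀ n : ℕ, (Complex.I : ℂ) ^ n ≠ 0 := fun n => pow_ne_zero n Complex.I_ne_zero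
  have hv' : ∀ t, v t = Complex.I ^ T.level t * (r t : ℂ) := by
    intro t
    rw [← hB t, ← mul_assoc, mul_inv_cancel₀ (hIne _), one_mul]
  have hr0 : ∀ t, r t ≠ 0 := by
    intro t h
    exact hnv t (by rw [hv' t, h, Complex.ofReal_zero, mul_zero])
  -- real recursion
  have hrec : ∀ t, lam t * r (T.parent t) = r t + ∑ y ∈ T.children t, lam y * r y := by
    intro t
    have h1 := key t
    rw [hv' (T.parent t), hv' t, T.level_parent t] at h1
    have hsum2 : ∑ y ∈ T.children t, (lam y : ℂ) * v y
        = Complex.I ^ T.level t * (-Complex.I) * ∑ y ∈ T.children t, (lam y : ℂ) * (r y : ℂ) := by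
      rw [Finset.mul_sum]
      refine Finset.sum_congr rfl fun y hy => ?_
      have hpy : T.parent y = t := (T.mem_children t y).1 hy
      have hl : T.level t = T.level y + 1 := by rw [← hpy, T.level_parent]
      rw [hv' y, hl, pow_succ]
      linear_combination (lam y : ℂ) * (r y : ℂ) * Complex.I ^ T.level y * Complex.I_sq
    rw [hsum2] at h1
    have h2 : (Complex.I ^ (T.level t + 1)) * ((lam t : ℂ) * (r (T.parent t) : ℂ))
        = (Complex.I ^ (T.level t + 1)) * ((r t : ℂ) + ∑ y ∈ T.children t, (lam y : ℂ) * (r y : ℂ)) := by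
      linear_combination h1
    have h3 := mul_left_cancel₀ (hIne (T.level t + 1)) h2
    have h4 : ((lam t * r (T.parent t) : ℝ) : ℂ)
        = ((r t + ∑ y ∈ T.children t, lam y * r y : ℝ) : ℂ) := by
      push_cast
      exact h3
    exact_mod_cast h4
  -- positivity of g t = lam t * r t * r (parent t), by strong induction on level
  have hg : ∀ n : ℕ, ∀ t, T.level t = n → 0 < lam t * r t * r (T.parent t) := by
    intro n
    induction n using Nat.strong_induction_on with
    | _ n ih =>
      intro t ht
      have e1 : lam t * r t * r (T.parent t)
          = r t ^ 2 + ∑ y ∈ T.children t, lam y * r y * r t := by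
        rw [Finset.sum_congr rfl fun y _ => (by ring : lam y * r y * r t = r t * (lam y * r y)),
          ← Finset.mul_sum]
        linear_combination r t * hrec t
      rw [e1]
      have hsq : 0 < r t ^ 2 := by have := hr0 t; positivity
      refine add_pos_of_pos_of_nonneg hsq (Finset.sum_nonneg fun y hy => ?_)
      have hpy : T.parent y = t := (T.mem_children t y).1 hy
      have hlt : T.level y < n := by
        have h5 : T.level t = T.level y + 1 := by rw [← hpy, T.level_parent]
        omega
      have h6 := ih (T.level y) hlt y rfl
      rw [hpy] at h6
      exact h6.le
  -- sign propagation
  have hsign : ∀ t, 0 < r t ↔ 0 < r (T.parent t) := by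
    intro t
    have h := hg (T.level t) t rfl
    have hl := hlam t
    have hprod : 0 < r t * r (T.parent t) := by nlinarith
    rcases mul_pos_iff.1 hprod with ⟨h1, h2⟩ | ⟨h1, h2⟩
    · exact ⟨fun _ => h2, fun _ => h1⟩
    · constructor
      · intro h3; exact absurd h3 (not_lt.2 h1.le)
      · intro h3; exact absurd h3 (not_lt.2 h2.le)
  have hiter : ∀ k : ℕ, ∀ t, 0 < r t ↔ 0 < r (T.parent^[k] t) := by
    intro k
    induction k with
    | zero => intro t; rfl
    | succ k ih =>
      intro t
      rw [Function.iterate_succ_apply]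
      exact (hsign t).trans (ih (T.parent t))
  have hx₀pos : 0 < r x₀ := by
    have : r x₀ = 1 := by simp [hrdef, hx₀, hv1]
    rw [this]; norm_num
  intro t
  refine ⟨r t, ?_, hB t⟩
  obtain ⟨k, l, hkl⟩ := T.connected t x₀
  have h1 : 0 < r (T.parent^[l] x₀) := (hiter l x₀).1 hx₀pos
  rw [← hkl] at h1
  exact (hiter k t).2 h1
end

section
/- Let v satisfy the recurrence ṽ(x) = λ_x ṽ(x') − Σ_{y∈N_x} λ_y ṽ(y) on a one-ended levelled tree, with ṽ > 0 everywhere. Then along any infinite path {x_n} with ℓ(x_n) = n one has λ_{x_n} ṽ(x_{n+1}) − λ_{x_{n−1}} ṽ(x_{n−1}) > 0 for all n ≥ 1, and consequently ṽ(x_{2n}) ≥ (λ_{x_0}λ_{x_2}⋯λ_{x_{2n−2}})/(λ_{x_1}λ_{x_3}⋯λ_{x_{2n−1}}) · ṽ(x_0) and ṽ(x_{2n+1}) ≥ (λ_{x_1}λ_{x_3}⋯λ_{x_{2n−1}})/(λ_{x_2}λ_{x_4}⋯λ_{x_{2n}}) · ṽ(x_1). -/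
/-- If `ṽ > 0` satisfies `ṽ(x) = λ_x ṽ(x') − Σ_{y∈N_x} λ_y ṽ(y)`, then along any
infinite path `x_n` one has `λ_{x_n} ṽ(x_{n+1}) − λ_{x_{n−1}} ṽ(x_{n−1}) > 0` for
`n ≥ 1`, and the products estimates
`ṽ(x_{2n}) ≥ (λ_{x_0}λ_{x_2}⋯λ_{x_{2n−2}})/(λ_{x_1}⋯λ_{x_{2n−1}}) ṽ(x_0)` and
`ṽ(x_{2n+1}) ≥ (λ_{x_1}⋯λ_{x_{2n−1}})/(λ_{x_2}⋯λ_{x_{2n}}) ṽ(x_1)` hold. -/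
theorem stmt_5 (T : JTree) (lam : T.V → ℝ) (hlam : ∀ t, 0 < lam t)
    (tv : T.V → ℝ) (htv : ∀ t, 0 < tv t)
    (hrec : ∀ t, tv t = lam t * tv (T.parent t) - ∑ y ∈ T.children t, lam y * tv y)
    (x : ℕ → T.V) (hpath : ∀ n, x (n + 1) = T.parent (x n))
    (hx0 : T.level (x 0) = 0) :
    (∀ n : ℕ, 0 < lam (x (n + 1)) * tv (x (n + 2)) - lam (x n) * tv (x n)) ∧
    (∀ n : ℕ,
      (∏ k ∈ Finset.range n, lam (x (2 * k))) /
        (∏ k ∈ Finset.range n, lam (x (2 * k + 1))) * tv (x 0) ≤ tv (x (2 * n))) ∧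
    (∀ n : ℕ,
      (∏ k ∈ Finset.range n, lam (x (2 * k + 1))) /
        (∏ k ∈ Finset.range n, lam (x (2 * k + 2))) * tv (x 1) ≤ tv (x (2 * n + 1))) := by
  have key : ∀ n : ℕ, 0 < lam (x (n + 1)) * tv (x (n + 2)) - lam (x n) * tv (x n) := by
    intro n
    have hmem : x n ∈ T.children (x (n + 1)) := by
      rw [T.mem_children]; exact (hpath n).symm
    have hsum : lam (x n) * tv (x n) ≤ ∑ y ∈ T.children (x (n + 1)), lam y * tv y :=
      Finset.single_le_sum (fun y _ => le_of_lt (mul_pos (hlam y) (htv y))) hmem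
    have hr := hrec (x (n + 1))
    rw [← hpath (n + 1)] at hr
    have := htv (x (n + 1))
    linarith
  have keyle : ∀ n : ℕ, lam (x n) * tv (x n) ≤ lam (x (n + 1)) * tv (x (n + 2)) := by
    intro n; have := key n; linarith
  refine ⟨key, ?_, ?_⟩
  · intro n
    have main : ∀ m : ℕ, (∏ k ∈ Finset.range m, lam (x (2 * k))) * tv (x 0) ≤
        (∏ k ∈ Finset.range m, lam (x (2 * k + 1))) * tv (x (2 * m)) := by
      intro m
      induction m with
      | zero => simp
      | succ m ih =>
        rw [Finset.prod_range_succ, Finset.prod_range_succ]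
        have hP : 0 < ∏ k ∈ Finset.range m, lam (x (2 * k)) :=
          Finset.prod_pos fun k _ => hlam _
        have hQ : 0 < ∏ k ∈ Finset.range m, lam (x (2 * k + 1)) :=
          Finset.prod_pos fun k _ => hlam _
        have hk := keyle (2 * m)
        have h1 : x (2 * m + 2) = x (2 * (m + 1)) := by ring_nf
        rw [h1] at hk
        have ha := hlam (x (2 * m))
        have hb := hlam (x (2 * m + 1))
        have h0 := htv (x 0)
        have h2 := htv (x (2 * m))
        have h3 := htv (x (2 * (m + 1)))
        nlinarith [mul_le_mul_of_nonneg_left hk hQ.le,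
          mul_le_mul_of_nonneg_left ih ha.le]
    have hQ : 0 < ∏ k ∈ Finset.range n, lam (x (2 * k + 1)) :=
      Finset.prod_pos fun k _ => hlam _
    rw [div_mul_eq_mul_div, div_le_iff₀ hQ]
    have := main n
    nlinarith
  · intro n
    have main : ∀ m : ℕ, (∏ k ∈ Finset.range m, lam (x (2 * k + 1))) * tv (x 1) ≤
        (∏ k ∈ Finset.range m, lam (x (2 * k + 2))) * tv (x (2 * m + 1)) := by
      intro m
      induction m with
      | zero => simp
      | succ m ih =>
        rw [Finset.prod_range_succ, Finset.prod_range_succ]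
        have hP : 0 < ∏ k ∈ Finset.range m, lam (x (2 * k + 1)) :=
          Finset.prod_pos fun k _ => hlam _
        have hQ : 0 < ∏ k ∈ Finset.range m, lam (x (2 * k + 2)) :=
          Finset.prod_pos fun k _ => hlam _
        have hk := keyle (2 * m + 1)
        have h1 : x (2 * m + 1 + 2) = x (2 * (m + 1) + 1) := by ring_nf
        rw [h1] at hk
        have ha := hlam (x (2 * m + 1))
        have hb := hlam (x (2 * m + 2))
        have h0 := htv (x 1)
        have h2 := htv (x (2 * m + 1))
        have h3 := htv (x (2 * (m + 1) + 1))
        nlinarith [mul_le_mul_of_nonneg_left hk hQ.le,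
          mul_le_mul_of_nonneg_left ih ha.le]
    have hQ : 0 < ∏ k ∈ Finset.range n, lam (x (2 * k + 2)) :=
      Finset.prod_pos fun k _ => hlam _
    rw [div_mul_eq_mul_div, div_le_iff₀ hQ]
    have := main n
    nlinarith
end

section
/- Let J be a symmetric Jacobi operator (β ≡ 0) on a one-ended levelled tree Γ that is not essentially self-adjoint, and let {x_n} be an infinite path with ℓ(x_n) = n. Then the classical Jacobi matrix J₀ on ℓ²(ℕ₀) with off-diagonal entries λ_n = λ_{x_n} and zero diagonal is not essentially self-adjoint; equivalently, Σ_{n≥1} [(λ_{x_0}λ_{x_2}⋯λ_{x_{2n−2}})/(λ_{x_1}λ_{x_3}⋯λ_{x_{2n−1}})]² + [(λ_{x_1}λ_{x_3}⋯λ_{x_{2n−1}})/(λ_{x_2}λ_{x_4}⋯λ_{x_{2n}})]² < ∞. -/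
/-!
Put `V(x) = ∑_{t ∈ Γ_x} |v t|²` for a solution of `Jv = iv`. Multiplying the equation at `x` by
`conj (v x)` and using the same identity for the children of `x` (induction on the level) gives the
flux identity `λ_x conj (v x) v(x') = i V(x)`, hence `λ_x |v x| |v x'| = V(x)`. If `V(x) = 0`, the
equation at `x` forces `v(x') = 0` and so `V(x') = 0`; by connectedness `V > 0` everywhere when
`v ≠ 0`, so `v` vanishes nowhere. Since `V` grows along the upward path,
`λ_{x_m} |v x_m| ≤ λ_{x_{m+1}} |v x_{m+2}|`, and telescoping every other step bounds the two ratios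
of products by `|v x_{2n+2}| / |v x_0|` and `|v x_{2n+3}| / |v x_1|`, which are square summable
because `v ∈ ℓ²`.
-/

open Finset ComplexConjugate

lemma prod_even_mul_le_prod_odd_mul {c a : ℕ → ℝ} (hc : ∀ n, 0 ≤ c n)
    (hstep : ∀ m, c m * a m ≤ c (m + 1) * a (m + 2)) (n : ℕ) :
    (∏ k ∈ range n, c (2 * k)) * a 0 ≤ (∏ k ∈ range n, c (2 * k + 1)) * a (2 * n) := by
  induction n with
  | zero => simp
  | succ n ih =>
    have hodd : 0 ≤ ∏ k ∈ range n, c (2 * k + 1) := prod_nonneg fun k _ => hc _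
    rw [prod_range_succ, prod_range_succ]
    calc (∏ k ∈ range n, c (2 * k)) * c (2 * n) * a 0
        = c (2 * n) * ((∏ k ∈ range n, c (2 * k)) * a 0) := by ring
      _ ≤ c (2 * n) * ((∏ k ∈ range n, c (2 * k + 1)) * a (2 * n)) :=
          mul_le_mul_of_nonneg_left ih (hc _)
      _ = (∏ k ∈ range n, c (2 * k + 1)) * (c (2 * n) * a (2 * n)) := by ring
      _ ≤ (∏ k ∈ range n, c (2 * k + 1)) * (c (2 * n + 1) * a (2 * n + 2)) :=
          mul_le_mul_of_nonneg_left (hstep _) hodd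
      _ = (∏ k ∈ range n, c (2 * k + 1)) * c (2 * n + 1) * a (2 * (n + 1)) := by ring_nf

lemma summable_sq_prod_even_div_prod_odd {c a : ℕ → ℝ} (hc : ∀ n, 0 < c n) (ha : ∀ n, 0 < a n)
    (hstep : ∀ m, c m * a m ≤ c (m + 1) * a (m + 2)) (hsq : Summable fun n => a n ^ 2) :
    Summable fun n : ℕ =>
      ((∏ k ∈ range (n + 1), c (2 * k)) / ∏ k ∈ range (n + 1), c (2 * k + 1)) ^ 2 := by
  have hbound : ∀ n, (∏ k ∈ range (n + 1), c (2 * k)) / (∏ k ∈ range (n + 1), c (2 * k + 1))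
      ≤ a (2 * n + 2) / a 0 := fun n => by
    rw [div_le_div_iff₀ (prod_pos fun k _ => hc _) (ha 0), mul_comm (a _)]
    simpa [mul_add] using prod_even_mul_le_prod_odd_mul (fun n => (hc n).le) hstep (n + 1)
  have hsub : Summable fun n : ℕ => (a (2 * n + 2) / a 0) ^ 2 := by
    simp_rw [div_pow]
    exact (hsq.comp_injective fun m n h => by simpa using h).div_const _
  refine hsub.of_nonneg_of_le (fun n => sq_nonneg _) fun n => ?_
  exact pow_le_pow_left₀ (div_nonneg (prod_nonneg fun k _ => (hc _).le)
    (prod_nonneg fun k _ => (hc _).le)) (hbound n) 2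

namespace JTree

variable (T : JTree)

lemma level_iterate_parent (t : T.V) (k : ℕ) : T.level (T.parent^[k] t) = T.level t + k := by
  induction k with
  | zero => rfl
  | succ k ih => rw [Function.iterate_succ_apply', T.level_parent, ih, add_assoc]

lemma parent_eq_of_mem_children {x y : T.V} (hy : y ∈ T.children x) : T.parent y = x :=
  (T.mem_children x y).mp hy

lemma level_lt_of_mem_children {x y : T.V} (hy : y ∈ T.children x) : T.level y < T.level x := by
  rw [← T.parent_eq_of_mem_children hy, T.level_parent]
  exact Nat.lt_succ_self _

lemma eq_of_descend_of_level_eq {t y z : T.V} (hy : T.descend t y) (hz : T.descend t z)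
    (hyz : T.level y = T.level z) : y = z := by
  obtain ⟨k, rfl⟩ := hy
  obtain ⟨l, rfl⟩ := hz
  rw [T.level_iterate_parent, T.level_iterate_parent] at hyz
  rw [Nat.add_left_cancel hyz]

lemma level_le_of_descend {t x : T.V} (h : T.descend t x) : T.level t ≤ T.level x := by
  obtain ⟨k, rfl⟩ := h
  rw [T.level_iterate_parent]
  exact Nat.le_add_right _ _

noncomputable def subtree (x : T.V) : Finset T.V := (T.subtree_finite x).toFinset

variable {T}

lemma mem_subtree {t x : T.V} : t ∈ T.subtree x ↔ T.descend t x :=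
  Set.Finite.mem_toFinset _

lemma self_mem_subtree (x : T.V) : x ∈ T.subtree x := mem_subtree.mpr ⟨0, rfl⟩

lemma iterate_parent_mem_subtree (t : T.V) (k : ℕ) : t ∈ T.subtree (T.parent^[k] t) :=
  mem_subtree.mpr ⟨k, rfl⟩

lemma subtree_subset_subtree_parent (x : T.V) : T.subtree x ⊆ T.subtree (T.parent x) :=
  fun t ht => by
    obtain ⟨k, hk⟩ := mem_subtree.mp ht
    exact mem_subtree.mpr ⟨k + 1, by rw [Function.iterate_succ_apply', hk]⟩

lemma subtree_subset_of_mem_children {x y : T.V} (hy : y ∈ T.children x) :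
    T.subtree y ⊆ T.subtree x :=
  T.parent_eq_of_mem_children hy ▸ subtree_subset_subtree_parent y

lemma subtree_eq_insert_biUnion [DecidableEq T.V] (x : T.V) :
    T.subtree x = insert x ((T.children x).biUnion T.subtree) := by
  ext t
  simp only [mem_insert, mem_biUnion, mem_subtree, descend]
  constructor
  · rintro ⟨_ | k, hk⟩
    · exact Or.inl hk
    · refine Or.inr ⟨T.parent^[k] t, ?_, k, rfl⟩
      rwa [T.mem_children, ← Function.iterate_succ_apply' T.parent]
  · rintro (rfl | ⟨y, hy, k, rfl⟩)
    · exact ⟨0, rfl⟩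
    · exact ⟨k + 1, by rw [Function.iterate_succ_apply', T.parent_eq_of_mem_children hy]⟩

lemma sum_subtree {M : Type*} [AddCommMonoid M] (f : T.V → M) (x : T.V) :
    ∑ t ∈ T.subtree x, f t = f x + ∑ y ∈ T.children x, ∑ t ∈ T.subtree y, f t := by
  classical
  rw [subtree_eq_insert_biUnion, sum_insert, sum_biUnion]
  · intro y hy z hz hyz
    refine disjoint_left.mpr fun t hty htz => hyz ?_
    refine T.eq_of_descend_of_level_eq (mem_subtree.mp hty) (mem_subtree.mp htz) ?_
    have hy' := T.level_parent y
    have hz' := T.level_parent z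
    rw [T.parent_eq_of_mem_children hy] at hy'
    rw [T.parent_eq_of_mem_children hz] at hz'
    omega
  · simp only [mem_biUnion, not_exists, not_and]
    intro y hy hx
    exact (T.level_lt_of_mem_children hy).not_ge (T.level_le_of_descend (mem_subtree.mp hx))

noncomputable def subtreeNormSq (v : T.V → ℂ) (x : T.V) : ℝ := ∑ t ∈ T.subtree x, ‖v t‖ ^ 2

lemma subtreeNormSq_eq_add_sum_children (v : T.V → ℂ) (x : T.V) :
    T.subtreeNormSq v x = ‖v x‖ ^ 2 + ∑ y ∈ T.children x, T.subtreeNormSq v y :=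
  sum_subtree _ x

lemma subtreeNormSq_nonneg (v : T.V → ℂ) (x : T.V) : 0 ≤ T.subtreeNormSq v x :=
  sum_nonneg fun _ _ => sq_nonneg _

lemma subtreeNormSq_mono_parent (v : T.V → ℂ) (x : T.V) :
    T.subtreeNormSq v x ≤ T.subtreeNormSq v (T.parent x) :=
  sum_le_sum_of_subset_of_nonneg (subtree_subset_subtree_parent x) fun _ _ _ => sq_nonneg _

lemma norm_sq_le_subtreeNormSq (v : T.V → ℂ) {t x : T.V} (ht : t ∈ T.subtree x) :
    ‖v t‖ ^ 2 ≤ T.subtreeNormSq v x :=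
  single_le_sum (f := fun t => ‖v t‖ ^ 2) (fun _ _ => sq_nonneg _) ht

section Eigenfunction

variable {lam : T.V → ℝ} {v : T.V → ℂ}
  (hv : ∀ t, T.jacobi lam (fun _ => 0) v t = Complex.I * v t)
include hv

theorem lam_mul_conj_mul_parent (x : T.V) :
    (lam x : ℂ) * conj (v x) * v (T.parent x) = Complex.I * (T.subtreeNormSq v x : ℂ) := by
  induction hn : T.level x using Nat.strong_induction_on generalizing x with
  | _ n ih =>
  have hchild : ∀ y ∈ T.children x,
      (lam y : ℂ) * v y * conj (v x) = -(Complex.I * (T.subtreeNormSq v y : ℂ)) := by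
    intro y hy
    have h := congrArg conj (ih _ (hn ▸ T.level_lt_of_mem_children hy) y rfl)
    rw [T.parent_eq_of_mem_children hy] at h
    simpa using h
  have heq := hv x
  simp only [jacobi, Complex.ofReal_zero, zero_mul, add_zero] at heq
  calc (lam x : ℂ) * conj (v x) * v (T.parent x)
      = conj (v x) * (Complex.I * v x) - ∑ y ∈ T.children x, (lam y : ℂ) * v y * conj (v x) := by
        rw [← heq, ← sum_mul]; ring
    _ = Complex.I * (T.subtreeNormSq v x : ℂ) := by
        have hnorm : conj (v x) * v x = (‖v x‖ : ℂ) ^ 2 := by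
          rw [mul_comm, Complex.mul_conj, Complex.normSq_eq_norm_sq, Complex.ofReal_pow]
        rw [sum_congr rfl hchild, sum_neg_distrib, subtreeNormSq_eq_add_sum_children]
        push_cast
        rw [mul_add, mul_sum]
        linear_combination Complex.I * hnorm

variable (hlam : ∀ t, 0 < lam t)
include hlam

lemma lam_mul_norm_mul_norm_parent (x : T.V) :
    lam x * (‖v x‖ * ‖v (T.parent x)‖) = T.subtreeNormSq v x := by
  have h := congrArg norm (lam_mul_conj_mul_parent hv x)
  simp only [norm_mul, Complex.norm_real, Complex.norm_I, RCLike.norm_conj, one_mul,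
    Real.norm_of_nonneg (hlam x).le, Real.norm_of_nonneg (T.subtreeNormSq_nonneg v x)] at h
  rw [← h, mul_assoc]

lemma subtreeNormSq_parent_eq_zero {x : T.V} (h0 : T.subtreeNormSq v x = 0) :
    T.subtreeNormSq v (T.parent x) = 0 := by
  have hzero : ∀ t ∈ T.subtree x, v t = 0 := fun t ht => by
    simpa using (sum_eq_zero_iff_of_nonneg fun _ _ => sq_nonneg _).mp h0 t ht
  have heq := hv x
  simp only [jacobi, hzero x (self_mem_subtree x), Complex.ofReal_zero, add_zero,
    mul_zero] at heq
  rw [sum_eq_zero fun y hy => by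
    rw [hzero y (subtree_subset_of_mem_children hy (self_mem_subtree y)), mul_zero],
    add_zero, mul_eq_zero, Complex.ofReal_eq_zero] at heq
  have hparent : v (T.parent x) = 0 := heq.resolve_left (hlam x).ne'
  rw [← lam_mul_norm_mul_norm_parent hv hlam, hparent, norm_zero, zero_mul, mul_zero]

variable (hne : ∃ t, v t ≠ 0)
include hne

lemma subtreeNormSq_pos (x : T.V) : 0 < T.subtreeNormSq v x := by
  obtain ⟨t, ht⟩ := hne
  obtain ⟨k, l, hkl⟩ := T.connected t x
  refine (T.subtreeNormSq_nonneg v x).lt_of_ne' fun h0 => ?_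
  have hup : ∀ l, T.subtreeNormSq v (T.parent^[l] x) = 0 := fun l => by
    induction l with
    | zero => exact h0
    | succ l ih =>
      rw [Function.iterate_succ_apply']
      exact subtreeNormSq_parent_eq_zero hv hlam ih
  have hle := T.norm_sq_le_subtreeNormSq v (iterate_parent_mem_subtree t k)
  rw [hkl, hup] at hle
  exact ht (by simpa using hle)

lemma norm_apply_pos (x : T.V) : 0 < ‖v x‖ := by
  refine (norm_nonneg _).lt_of_ne' fun hx => ?_
  have h := subtreeNormSq_pos hv hlam hne x
  rw [← lam_mul_norm_mul_norm_parent hv hlam, hx, zero_mul, mul_zero] at h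
  exact h.false

lemma lam_mul_norm_le_lam_parent_mul_norm (x : T.V) :
    lam x * ‖v x‖ ≤ lam (T.parent x) * ‖v (T.parent (T.parent x))‖ := by
  refine le_of_mul_le_mul_right ?_ (norm_apply_pos hv hlam hne (T.parent x))
  calc lam x * ‖v x‖ * ‖v (T.parent x)‖ = T.subtreeNormSq v x := by
        rw [← lam_mul_norm_mul_norm_parent hv hlam, mul_assoc]
    _ ≤ T.subtreeNormSq v (T.parent x) := T.subtreeNormSq_mono_parent v x
    _ = lam (T.parent x) * ‖v (T.parent (T.parent x))‖ * ‖v (T.parent x)‖ := by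
        rw [← lam_mul_norm_mul_norm_parent hv hlam]
        ring

end Eigenfunction

lemma level_path {x : ℕ → T.V} (hpath : ∀ n, x (n + 1) = T.parent (x n)) (n : ℕ) :
    T.level (x n) = T.level (x 0) + n := by
  induction n with
  | zero => rfl
  | succ n ih => rw [hpath, T.level_parent, ih, add_assoc]

lemma path_injective {x : ℕ → T.V} (hpath : ∀ n, x (n + 1) = T.parent (x n)) :
    Function.Injective x := fun m n h => by
  have hlevel := congrArg T.level h
  rw [level_path hpath m, level_path hpath n] at hlevel
  omega

end JTree

theorem stmt_6_general (T : JTree) (lam : T.V → ℝ) (hlam : ∀ t, 0 < lam t)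
    (x : ℕ → T.V) (hpath : ∀ n, x (n + 1) = T.parent (x n))
    (hnsa : ∃ v : T.V → ℂ, Summable (fun t => ‖v t‖ ^ 2) ∧ (∃ t, v t ≠ 0) ∧
      ∀ t, T.jacobi lam (fun _ => 0) v t = Complex.I * v t) :
    Summable (fun n : ℕ =>
      ((∏ k ∈ Finset.range (n + 1), lam (x (2 * k))) /
        (∏ k ∈ Finset.range (n + 1), lam (x (2 * k + 1)))) ^ 2 +
      ((∏ k ∈ Finset.range (n + 1), lam (x (2 * k + 1))) /
        (∏ k ∈ Finset.range (n + 1), lam (x (2 * k + 2)))) ^ 2) := by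
  obtain ⟨v, hsum, hne, hv⟩ := hnsa
  have hpos : ∀ n, 0 < ‖v (x n)‖ := fun n => JTree.norm_apply_pos hv hlam hne (x n)
  have hstep : ∀ m, lam (x m) * ‖v (x m)‖ ≤ lam (x (m + 1)) * ‖v (x (m + 2))‖ := fun m => by
    simpa only [hpath] using JTree.lam_mul_norm_le_lam_parent_mul_norm hv hlam hne (x m)
  have hsq : Summable fun n => ‖v (x n)‖ ^ 2 := hsum.comp_injective (JTree.path_injective hpath)
  have heven := summable_sq_prod_even_div_prod_odd (fun n => hlam _) hpos hstep hsq
  have hodd := summable_sq_prod_even_div_prod_odd (c := fun n => lam (x (n + 1)))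
    (a := fun n => ‖v (x (n + 1))‖) (fun n => hlam _) (fun n => hpos (n + 1))
      (fun m => hstep (m + 1)) (hsq.comp_injective (add_left_injective 1))
  exact heven.add hodd

/-- If a symmetric Jacobi operator (`β ≡ 0`) on the tree is not essentially
self-adjoint (i.e. there is a nonzero `ℓ²` solution of `Jv = iv`), then the classical
Jacobi matrix along any infinite path is not essentially self-adjoint; equivalently
`Σ_{n≥1} [(λ_{x_0}λ_{x_2}⋯λ_{x_{2n−2}})/(λ_{x_1}⋯λ_{x_{2n−1}})]²
 + [(λ_{x_1}⋯λ_{x_{2n−1}})/(λ_{x_2}⋯λ_{x_{2n}})]² < ∞`. -/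
theorem stmt_6 (T : JTree) (lam : T.V → ℝ) (hlam : ∀ t, 0 < lam t)
    (x : ℕ → T.V) (hpath : ∀ n, x (n + 1) = T.parent (x n))
    (hx0 : T.level (x 0) = 0)
    (hnsa : ∃ v : T.V → ℂ, Summable (fun t => ‖v t‖ ^ 2) ∧ (∃ t, v t ≠ 0) ∧
      ∀ t, T.jacobi lam (fun _ => 0) v t = Complex.I * v t) :
    Summable (fun n : ℕ =>
      ((∏ k ∈ Finset.range (n + 1), lam (x (2 * k))) /
        (∏ k ∈ Finset.range (n + 1), lam (x (2 * k + 1)))) ^ 2 +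
      ((∏ k ∈ Finset.range (n + 1), lam (x (2 * k + 1))) /
        (∏ k ∈ Finset.range (n + 1), lam (x (2 * k + 2)))) ^ 2) :=
  stmt_6_general T lam hlam x hpath hnsa
end

section
/- Let A be a symmetric densely defined operator on a Hilbert space H with domain D(A), let H₀ ⊆ D(A) be a finite-dimensional subspace, P the orthogonal projection onto H₀, and define à = (I−P)A(I−P) on H₀^⊥. Then à is essentially self-adjoint if and only if A is essentially self-adjoint. -/
/-!
For a symmetric `T` on a Hilbert space, density of the ranges of `T ± i` is equivalent to
symmetry of the adjoint relation: `⟪k, w⟫ = ⟪w, k⟫` whenever `⟪T x, w⟫ = ⟪x, k⟫` for all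
`x ∈ D(T)`. Forwards, the identity
`‖(T + s i) x - (k + s i w)‖² = ‖T x - k‖² + s² ‖x - w‖² - 2 s Im ⟪k, w⟫` has a left side that
density makes arbitrarily small, so `s Im ⟪k, w⟫ ≥ 0` for `s = ±1`. Backwards, `w ⊥ ran (T ± i)`
means `T* w = ± i w`, and symmetry forces `w = 0`.

Symmetry of the adjoint relation then passes between `A` and its compression `Ã`: if `A* w = k`
with `w = w₀ + w₁ ∈ H₀ ⊕ H₀ᗮ`, then `Ã* w₁ = (I - P)(k - A w₀)`; if `Ã* w = k`, then
`A* w = k + g` with `g ∈ H₀` representing `p ↦ ⟪A p, w⟫` on the finite-dimensional `H₀`. In both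
cases the correction terms are orthogonal to `w` or real.
-/

/-- A densely defined symmetric operator is essentially self-adjoint iff the ranges
of `A ± i` are dense. We use this as the definition. -/
def EssSelfAdjoint {E : Type*} [NormedAddCommGroup E] [InnerProductSpace ℂ E]
    (A : E →ₗ.[ℂ] E) : Prop :=
  Dense (Set.range fun x : A.domain => A x + Complex.I • (x : E)) ∧
  Dense (Set.range fun x : A.domain => A x - Complex.I • (x : E))

open Complex Set
open scoped InnerProductSpace

namespace LinearPMap

variable {E : Type*} [NormedAddCommGroup E] [InnerProductSpace ℂ E]

theorem IsFormalAdjoint.im_inner_apply_self_eq_zero {T : E →ₗ.[ℂ] E} (hT : T.IsFormalAdjoint T)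
    (x : T.domain) : (⟪T x, (x : E)⟫_ℂ).im = 0 := by
  have h := congrArg Complex.im (hT x x)
  rw [← inner_conj_symm (x : E), conj_im] at h
  linarith

theorem IsFormalAdjoint.norm_add_smul_I_sub_sq {T : E →ₗ.[ℂ] E} (hT : T.IsFormalAdjoint T)
    {w k : E} (hwk : ∀ x : T.domain, ⟪T x, w⟫_ℂ = ⟪(x : E), k⟫_ℂ) (s : ℝ) (x : T.domain) :
    ‖T x + (s * I) • (x : E) - (k + (s * I) • w)‖ ^ 2
      = ‖T x - k‖ ^ 2 + s ^ 2 * ‖(x : E) - w‖ ^ 2 - 2 * s * (⟪k, w⟫_ℂ).im := by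
  have hsplit : T x + (s * I) • (x : E) - (k + (s * I) • w)
      = (T x - k) + (s * I) • ((x : E) - w) := by
    rw [smul_sub]; abel
  have him : (⟪T x - k, (x : E) - w⟫_ℂ).im = (⟪k, w⟫_ℂ).im := by
    rw [inner_sub_left, inner_sub_right, inner_sub_right, hwk x, ← inner_conj_symm (x : E) k]
    simp only [sub_im, conj_im, hT.im_inner_apply_self_eq_zero x]
    ring
  rw [hsplit, @norm_add_sq ℂ, norm_smul, inner_smul_right, mul_pow, norm_mul, norm_I, mul_one,
    Complex.norm_real, Real.norm_eq_abs, sq_abs, RCLike.re_to_complex]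
  simp only [mul_re, mul_im, ofReal_re, I_re, ofReal_im, I_im, him]
  ring

/-- The adjoint of `T`, read as a relation since `D(T)` need not be dense, is symmetric. -/
def AdjointSymmetric (T : E →ₗ.[ℂ] E) : Prop :=
  ∀ w k : E, (∀ x : T.domain, ⟪T x, w⟫_ℂ = ⟪(x : E), k⟫_ℂ) → ⟪k, w⟫_ℂ = ⟪w, k⟫_ℂ

theorem essSelfAdjoint_iff_denseRange {T : E →ₗ.[ℂ] E} :
    EssSelfAdjoint T ↔ ∀ s : ℝ, (s = 1 ∨ s = -1) →
      DenseRange fun x : T.domain => T x + (s * I) • (x : E) := by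
  simp [EssSelfAdjoint, DenseRange, sub_eq_add_neg]

theorem IsFormalAdjoint.mul_im_inner_nonneg {T : E →ₗ.[ℂ] E} (hT : T.IsFormalAdjoint T)
    {w k : E} (hwk : ∀ x : T.domain, ⟪T x, w⟫_ℂ = ⟪(x : E), k⟫_ℂ) {s : ℝ}
    (hs : DenseRange fun x : T.domain => T x + (s * I) • (x : E)) :
    0 ≤ s * (⟪k, w⟫_ℂ).im := by
  have h := hs.induction_on
    (p := fun y => -(2 * s * (⟪k, w⟫_ℂ).im) ≤ ‖y - (k + (s * I) • w)‖ ^ 2) (k + (s * I) • w)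
    (isClosed_le continuous_const (by fun_prop)) fun x => by
      rw [hT.norm_add_smul_I_sub_sq hwk]
      linarith [sq_nonneg ‖T x - k‖, mul_nonneg (sq_nonneg s) (sq_nonneg ‖(x : E) - w‖)]
  rw [sub_self, norm_zero, zero_pow two_ne_zero] at h
  linarith

theorem _root_.EssSelfAdjoint.adjointSymmetric {T : E →ₗ.[ℂ] E} (h : EssSelfAdjoint T)
    (hT : T.IsFormalAdjoint T) : T.AdjointSymmetric := by
  intro w k hwk
  have hd := essSelfAdjoint_iff_denseRange.mp h
  have hpos := hT.mul_im_inner_nonneg hwk (hd 1 (.inl rfl))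
  have hneg := hT.mul_im_inner_nonneg hwk (hd (-1) (.inr rfl))
  have him : (⟪k, w⟫_ℂ).im = 0 := by linarith
  exact (conj_eq_iff_im.mpr him).symm.trans (inner_conj_symm w k)

theorem AdjointSymmetric.denseRange [CompleteSpace E] {T : E →ₗ.[ℂ] E} (h : T.AdjointSymmetric)
    {s : ℝ} (hs : s ≠ 0) : DenseRange fun x : T.domain => T x + (s * I) • (x : E) := by
  let L : T.domain →ₗ[ℂ] E := T.toFun + (s * I) • T.domain.subtype
  change Dense (LinearMap.range L : Set E)
  rw [Submodule.dense_iff_topologicalClosure_eq_top, Submodule.topologicalClosure_eq_top_iff,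
    Submodule.eq_bot_iff]
  intro w hw
  have hwk : ∀ x : T.domain, ⟪T x, w⟫_ℂ = ⟪(x : E), (s * I) • w⟫_ℂ := by
    intro x
    have h0 : ⟪L x, w⟫_ℂ = 0 := (Submodule.mem_orthogonal _ w).mp hw _ ⟨x, rfl⟩
    simp only [L, LinearMap.add_apply, LinearMap.smul_apply, Submodule.subtype_apply,
      inner_add_left, inner_smul_left, inner_smul_right, LinearPMap.toFun_eq_coe, map_mul,
      conj_ofReal, conj_I] at h0 ⊢
    linear_combination h0
  have h2 := h w _ hwk
  simp only [inner_smul_left, inner_smul_right, inner_self_eq_norm_sq_to_K, map_mul, conj_ofReal,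
    conj_I] at h2
  have h3 : ((s : ℂ) * I) * (‖w‖ : ℂ) ^ 2 = 0 := by linear_combination -h2 / 2
  simpa [hs, I_ne_zero] using h3

theorem IsFormalAdjoint.essSelfAdjoint_iff [CompleteSpace E] {T : E →ₗ.[ℂ] E}
    (hT : T.IsFormalAdjoint T) : EssSelfAdjoint T ↔ T.AdjointSymmetric :=
  ⟨fun h => h.adjointSymmetric hT, fun h => essSelfAdjoint_iff_denseRange.mpr fun s hs =>
    h.denseRange (by rcases hs with rfl | rfl <;> norm_num)⟩

section Compression

variable {H : Type*} [NormedAddCommGroup H] [InnerProductSpace ℂ H] {A : H →ₗ.[ℂ] H}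
  {H₀ : Submodule ℂ H} {B : H₀ᗮ →ₗ.[ℂ] H₀ᗮ}

theorem IsFormalAdjoint.compression (hA : A.IsFormalAdjoint A)
    (hdom : ∀ u : H₀ᗮ, u ∈ B.domain ↔ (u : H) ∈ A.domain)
    (hBA : ∀ (u : B.domain) (hu : ((u : H₀ᗮ) : H) ∈ A.domain) (y : H₀ᗮ),
      ⟪B u, y⟫_ℂ = ⟪A ⟨_, hu⟩, (y : H)⟫_ℂ) :
    B.IsFormalAdjoint B := by
  intro u v
  have hu := (hdom _).mp u.2
  have hv := (hdom _).mp v.2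
  rw [hBA u hu, hA ⟨_, hu⟩ ⟨_, hv⟩, ← inner_conj_symm (u : H₀ᗮ), hBA v hv, inner_conj_symm]

theorem AdjointSymmetric.of_compression (hB : B.AdjointSymmetric) (hA : A.IsFormalAdjoint A)
    [H₀.HasOrthogonalProjection] (hsub : H₀ ≤ A.domain)
    (hdom : ∀ u : H₀ᗮ, u ∈ B.domain ↔ (u : H) ∈ A.domain)
    (hBA : ∀ (u : B.domain) (hu : ((u : H₀ᗮ) : H) ∈ A.domain) (y : H₀ᗮ),
      ⟪B u, y⟫_ℂ = ⟪A ⟨_, hu⟩, (y : H)⟫_ℂ) :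
    A.AdjointSymmetric := by
  intro w k hwk
  obtain ⟨w₀, hw₀, w₁, hw₁, rfl⟩ := H₀.exists_add_mem_mem_orthogonal w
  have h1 := hwk ⟨w₀, hsub hw₀⟩
  have h2 := hA ⟨w₀, hsub hw₀⟩ ⟨w₀, hsub hw₀⟩
  set a := A ⟨w₀, hsub hw₀⟩
  obtain ⟨c₀, hc₀, k₁, hk₁, hc⟩ := H₀.exists_add_mem_mem_orthogonal (k - a)
  have hB' : ∀ u : B.domain, ⟪B u, ⟨w₁, hw₁⟩⟫_ℂ = ⟪(u : H₀ᗮ), ⟨k₁, hk₁⟩⟫_ℂ := by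
    intro u
    have hu := (hdom _).mp u.2
    rw [hBA u hu, Submodule.coe_inner]
    have h1 := hwk ⟨_, hu⟩
    have h2 := hA ⟨_, hu⟩ ⟨w₀, hsub hw₀⟩
    have h3 : ⟪((u : H₀ᗮ) : H), c₀⟫_ℂ = 0 :=
      Submodule.inner_left_of_mem_orthogonal hc₀ (u : H₀ᗮ).2
    have h4 : ⟪((u : H₀ᗮ) : H), k - a⟫_ℂ = ⟪((u : H₀ᗮ) : H), c₀ + k₁⟫_ℂ := by rw [hc]
    simp only [inner_add_right, inner_sub_right] at h1 h4 ⊢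
    linear_combination h1 - h2 + h4 + h3
  have hsymm := hB _ _ hB'
  simp only [Submodule.coe_inner] at hsymm
  have h1' : ⟪k, w₀⟫_ℂ = ⟪w₀ + w₁, a⟫_ℂ := by rw [← inner_conj_symm, ← h1, inner_conj_symm]
  have hk : k₁ = k - a - c₀ := by rw [hc]; abel
  have z1 : ⟪c₀, w₁⟫_ℂ = 0 := Submodule.inner_right_of_mem_orthogonal hc₀ hw₁
  have z2 : ⟪w₁, c₀⟫_ℂ = 0 := Submodule.inner_left_of_mem_orthogonal hc₀ hw₁
  rw [hk] at hsymm
  simp only [inner_add_left, inner_add_right, inner_sub_left, inner_sub_right]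
    at hsymm h1 h1' h2 ⊢
  linear_combination hsymm + h1' + h1 - h2 + z1 - z2

theorem AdjointSymmetric.compression [CompleteSpace H] (hA : A.AdjointSymmetric)
    [FiniteDimensional ℂ H₀] (hsub : H₀ ≤ A.domain)
    (hdom : ∀ u : H₀ᗮ, u ∈ B.domain ↔ (u : H) ∈ A.domain)
    (hBA : ∀ (u : B.domain) (hu : ((u : H₀ᗮ) : H) ∈ A.domain) (y : H₀ᗮ),
      ⟪B u, y⟫_ℂ = ⟪A ⟨_, hu⟩, (y : H)⟫_ℂ) :
    B.AdjointSymmetric := by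
  intro w k hwk
  let L : H₀ →L[ℂ] H :=
    LinearMap.toContinuousLinearMap (A.toFun.comp (Submodule.inclusion hsub))
  set g : H₀ := L.adjoint w
  have hAw : ∀ x : A.domain, ⟪A x, (w : H)⟫_ℂ = ⟪(x : H), k + g⟫_ℂ := by
    intro x
    obtain ⟨p, hp, u, hu, hx⟩ := H₀.exists_add_mem_mem_orthogonal (x : H)
    have huA : u ∈ A.domain := by
      rw [show u = (x : H) - p by rw [hx]; abel]
      exact A.domain.sub_mem x.2 (hsub hp)
    have hsplit : x = ⟨p, hsub hp⟩ + ⟨u, huA⟩ := Subtype.ext hx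
    have hAp : ⟪A ⟨p, hsub hp⟩, (w : H)⟫_ℂ = ⟪p, (g : H)⟫_ℂ :=
      (L.adjoint_inner_right ⟨p, hp⟩ w).symm
    have hAu := hBA ⟨⟨u, hu⟩, (hdom _).mpr huA⟩ huA w
    rw [hwk, Submodule.coe_inner] at hAu
    have z1 : ⟪p, (k : H)⟫_ℂ = 0 := Submodule.inner_right_of_mem_orthogonal hp k.2
    have z2 : ⟪u, (g : H)⟫_ℂ = 0 := Submodule.inner_left_of_mem_orthogonal g.2 hu
    rw [hsplit, A.map_add, inner_add_left, hAp]
    simp only [Submodule.coe_add, inner_add_left, inner_add_right] at hAu ⊢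
    linear_combination -hAu - z1 - z2
  have hsymm := hA _ _ hAw
  have z1 : ⟪(g : H), (w : H)⟫_ℂ = 0 := Submodule.inner_right_of_mem_orthogonal g.2 w.2
  have z2 : ⟪(w : H), (g : H)⟫_ℂ = 0 := Submodule.inner_left_of_mem_orthogonal g.2 w.2
  rw [inner_add_left, inner_add_right, z1, z2, add_zero, add_zero] at hsymm
  simpa only [Submodule.coe_inner] using hsymm

end Compression

end LinearPMap

theorem stmt_7_general {H : Type*} [NormedAddCommGroup H] [InnerProductSpace ℂ H]
    [CompleteSpace H]
    (A : H →ₗ.[ℂ] H) (hsym : ∀ x y : A.domain, (inner ℂ (A x) ((y : A.domain) : H) : ℂ) = inner ℂ ((x : A.domain) : H) (A y))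
    (H₀ : Submodule ℂ H) [FiniteDimensional ℂ H₀] (hsub : H₀ ≤ A.domain)
    (B : (H₀ᗮ : Submodule ℂ H) →ₗ.[ℂ] (H₀ᗮ : Submodule ℂ H))
    (hdom : ∀ u : H₀ᗮ, u ∈ B.domain ↔ (u : H) ∈ A.domain)
    (hB : ∀ (u : B.domain) (hu : ((u : H₀ᗮ) : H) ∈ A.domain),
      ((B u : H₀ᗮ) : H) = A ⟨((u : H₀ᗮ) : H), hu⟩
        - (H₀.orthogonalProjectionOnto (A ⟨((u : H₀ᗮ) : H), hu⟩) : H)) :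
    EssSelfAdjoint B ↔ EssSelfAdjoint A := by
  have hBA : ∀ (u : B.domain) (hu : ((u : H₀ᗮ) : H) ∈ A.domain) (y : H₀ᗮ),
      ⟪B u, y⟫_ℂ = ⟪A ⟨_, hu⟩, (y : H)⟫_ℂ := fun u hu y => by
    rw [Submodule.coe_inner, hB u hu, inner_sub_left,
      Submodule.inner_right_of_mem_orthogonal (Submodule.coe_mem _) y.2, sub_zero]
  rw [(LinearPMap.IsFormalAdjoint.compression hsym hdom hBA).essSelfAdjoint_iff,
    LinearPMap.IsFormalAdjoint.essSelfAdjoint_iff hsym]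
  exact ⟨fun h => h.of_compression hsym hsub hdom hBA, fun h => h.compression hsub hdom hBA⟩

/-- Let `A` be symmetric densely defined on `H`, `H₀ ⊆ D(A)` finite dimensional,
`P` the orthogonal projection onto `H₀`, and `Ã = (I−P)A(I−P)` on `H₀ᗮ` with domain
`(I−P)D(A) = D(A) ∩ H₀ᗮ`. Then `Ã` is essentially self-adjoint iff `A` is. -/
theorem stmt_7 {H : Type*} [NormedAddCommGroup H] [InnerProductSpace ℂ H]
    [CompleteSpace H]
    (A : H →ₗ.[ℂ] H) (hdense : Dense (A.domain : Set H)) (hsym : ∀ x y : A.domain, (inner ℂ (A x) ((y : A.domain) : H) : ℂ) = inner ℂ ((x : A.domain) : H) (A y))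
    (H₀ : Submodule ℂ H) [FiniteDimensional ℂ H₀] (hsub : H₀ ≤ A.domain)
    (B : (H₀ᗮ : Submodule ℂ H) →ₗ.[ℂ] (H₀ᗮ : Submodule ℂ H))
    (hdom : ∀ u : H₀ᗮ, u ∈ B.domain ↔ (u : H) ∈ A.domain)
    (hB : ∀ (u : B.domain) (hu : ((u : H₀ᗮ) : H) ∈ A.domain),
      ((B u : H₀ᗮ) : H) = A ⟨((u : H₀ᗮ) : H), hu⟩
        - (H₀.orthogonalProjectionOnto (A ⟨((u : H₀ᗮ) : H), hu⟩) : H)) :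
    EssSelfAdjoint B ↔ EssSelfAdjoint A :=
  stmt_7_general A hsym H₀ hsub B hdom hB
end

section
/- Suppose there exists a strictly positive function m on a one-ended levelled tree Γ such that β_x m(x) ≥ λ_x m(x') + Σ_{y∈N_x} λ_y m(y) for every vertex x. Then the Jacobi operator J is positive semidefinite on finitely supported functions: ⟨Jv, v⟩ ≥ 0 for all finitely supported v : Γ → ℂ. -/
/-- If there is a strictly positive function `m` on `Γ` with
`β_x m(x) ≥ λ_x m(x') + Σ_{y∈N_x} λ_y m(y)` for all `x`, then the Jacobi operator is
positive semidefinite on finitely supported functions: `⟨Jv, v⟩ ≥ 0`. -/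
theorem stmt_10 (T : JTree) (lam beta : T.V → ℝ) (hlam : ∀ t, 0 < lam t)
    (m : T.V → ℝ) (hm : ∀ t, 0 < m t)
    (hineq : ∀ t, lam t * m (T.parent t) + ∑ y ∈ T.children t, lam y * m y ≤
      beta t * m t)
    (v : T.V → ℂ) (hv : {t : T.V | v t ≠ 0}.Finite) :
    0 ≤ (∑' t : T.V, T.jacobi lam beta v t * (starRingEnd ℂ) (v t)).re ∧
      (∑' t : T.V, T.jacobi lam beta v t * (starRingEnd ℂ) (v t)).im = 0 := by
  classical
  set S : Finset T.V := hv.toFinset with hSdef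
  have hmemS : ∀ t : T.V, t ∈ S ↔ v t ≠ 0 := fun t => hv.mem_toFinset
  have hvS : ∀ t, t ∉ S → v t = 0 := by
    intro t ht
    by_contra h
    exact ht ((hmemS t).mpr h)
  -- reduce tsum to finite sum
  have h0 : (∑' t : T.V, T.jacobi lam beta v t * (starRingEnd ℂ) (v t))
      = ∑ t ∈ S, T.jacobi lam beta v t * (starRingEnd ℂ) (v t) := by
    apply tsum_eq_sum
    intro t ht
    rw [hvS t ht]
    simp
  set P : Finset T.V := S.filter (fun t => T.parent t ∈ S) with hPdef
  have hPS : P ⊆ S := Finset.filter_subset _ _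
  set U : Finset T.V := S.biUnion T.children with hUdef
  have hPU : P ⊆ U := by
    intro y hy
    rw [hPdef, Finset.mem_filter] at hy
    rw [hUdef, Finset.mem_biUnion]
    exact ⟨T.parent y, hy.2, (T.mem_children _ _).mpr rfl⟩
  -- the summand splits
  have hA : (∑ t ∈ S, (lam t : ℂ) * v (T.parent t) * (starRingEnd ℂ) (v t))
      = ∑ t ∈ P, (lam t : ℂ) * v (T.parent t) * (starRingEnd ℂ) (v t) := by
    symm
    apply Finset.sum_subset hPS
    intro t htS htP
    have : T.parent t ∉ S := by
      intro hc
      exact htP (Finset.mem_filter.mpr ⟨htS, hc⟩)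
    rw [hvS _ this]
    ring
  set g : T.V → ℂ := fun y => (lam y : ℂ) * v y * (starRingEnd ℂ) (v (T.parent y)) with hgdef
  have hB : (∑ t ∈ S, ∑ y ∈ T.children t, (lam y : ℂ) * v y * (starRingEnd ℂ) (v t))
      = ∑ y ∈ P, g y := by
    have hdisj : (S : Set T.V).PairwiseDisjoint T.children := by
      intro a _ b _ hab
      simp only [Finset.disjoint_left]
      intro y hya hyb
      exact hab (((T.mem_children a y).mp hya).symm.trans ((T.mem_children b y).mp hyb))
    have h1 : (∑ t ∈ S, ∑ y ∈ T.children t, (lam y : ℂ) * v y * (starRingEnd ℂ) (v t))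
        = ∑ y ∈ U, g y := by
      rw [hUdef, Finset.sum_biUnion hdisj]
      apply Finset.sum_congr rfl
      intro t _
      apply Finset.sum_congr rfl
      intro y hy
      have hpy := (T.mem_children t y).mp hy
      simp only [hgdef, hpy]
    rw [h1]
    symm
    apply Finset.sum_subset hPU
    intro y hyU hyP
    have hyS : y ∉ S := by
      intro hc
      have hpy : T.parent y ∈ S := by
        rw [hUdef, Finset.mem_biUnion] at hyU
        obtain ⟨t, htS, hyt⟩ := hyU
        rwa [(T.mem_children t y).mp hyt]
      exact hyP (Finset.mem_filter.mpr ⟨hc, hpy⟩)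
    rw [hgdef]
    simp [hvS y hyS]
  clear_value S P U
  -- real value
  set r : ℝ := (∑ t ∈ P, lam t * (2 * (v (T.parent t) * (starRingEnd ℂ) (v t)).re))
      + ∑ t ∈ S, beta t * Complex.normSq (v t) with hrdef
  have htot : (∑' t : T.V, T.jacobi lam beta v t * (starRingEnd ℂ) (v t)) = (r : ℂ) := by
    rw [h0]
    have hsplit : ∀ t ∈ S, T.jacobi lam beta v t * (starRingEnd ℂ) (v t)
        = (lam t : ℂ) * v (T.parent t) * (starRingEnd ℂ) (v t)
          + (beta t : ℂ) * (v t * (starRingEnd ℂ) (v t))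
          + ∑ y ∈ T.children t, (lam y : ℂ) * v y * (starRingEnd ℂ) (v t) := by
      intro t _
      simp only [JTree.jacobi, add_mul, Finset.sum_mul]
      ring
    rw [Finset.sum_congr rfl hsplit, Finset.sum_add_distrib, Finset.sum_add_distrib, hA, hB]
    have hpair : (∑ t ∈ P, (lam t : ℂ) * v (T.parent t) * (starRingEnd ℂ) (v t))
        + ∑ y ∈ P, g y
        = ((∑ t ∈ P, lam t * (2 * (v (T.parent t) * (starRingEnd ℂ) (v t)).re) : ℝ) : ℂ) := by
      rw [← Finset.sum_add_distrib]
      push_cast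
      apply Finset.sum_congr rfl
      intro t _
      rw [hgdef]
      have : (lam t : ℂ) * v (T.parent t) * (starRingEnd ℂ) (v t)
          + (lam t : ℂ) * v t * (starRingEnd ℂ) (v (T.parent t))
          = (lam t : ℂ) * ((v (T.parent t) * (starRingEnd ℂ) (v t))
            + (starRingEnd ℂ) (v (T.parent t) * (starRingEnd ℂ) (v t))) := by
        rw [map_mul, Complex.conj_conj]
        ring
      rw [this, Complex.add_conj]
      push_cast
      ring
    have hdiag : (∑ t ∈ S, (beta t : ℂ) * (v t * (starRingEnd ℂ) (v t)))
        = ((∑ t ∈ S, beta t * Complex.normSq (v t) : ℝ) : ℂ) := by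
      push_cast
      apply Finset.sum_congr rfl
      intro t _
      rw [Complex.mul_conj]
    rw [hrdef, Complex.ofReal_add, ← hpair, ← hdiag]
    ring
  have him : (∑' t : T.V, T.jacobi lam beta v t * (starRingEnd ℂ) (v t)).im = 0 := by
    rw [htot, Complex.ofReal_im]
  have hre : (∑' t : T.V, T.jacobi lam beta v t * (starRingEnd ℂ) (v t)).re = r := by
    rw [htot, Complex.ofReal_re]
  refine ⟨?_, him⟩
  rw [hre]
  -- now prove 0 ≤ r
  -- AM-GM bound on each edge term
  have key : ∀ t ∈ P,
      -(lam t * m t / m (T.parent t) * Complex.normSq (v (T.parent t))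
        + lam t * (m (T.parent t) / m t) * Complex.normSq (v t))
      ≤ lam t * (2 * (v (T.parent t) * (starRingEnd ℂ) (v t)).re) := by
    intro t _
    have hp := hm (T.parent t)
    have ht := hm t
    have hl := hlam t
    set a := Real.sqrt (m (T.parent t)) with hadef
    set b := Real.sqrt (m t) with hbdef
    have ha : 0 < a := Real.sqrt_pos.mpr hp
    have hb : 0 < b := Real.sqrt_pos.mpr ht
    have ha2 : a ^ 2 = m (T.parent t) := Real.sq_sqrt hp.le
    have hb2 : b ^ 2 = m t := Real.sq_sqrt ht.le
    have h2 : (0:ℝ) ≤ Complex.normSq (((b/a : ℝ) : ℂ) * v (T.parent t) + ((a/b : ℝ) : ℂ) * v t) :=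
      Complex.normSq_nonneg _
    rw [Complex.normSq_add] at h2
    have h3 : (((b/a : ℝ) : ℂ) * v (T.parent t) * (starRingEnd ℂ) (((a/b : ℝ) : ℂ) * v t))
        = v (T.parent t) * (starRingEnd ℂ) (v t) := by
      rw [map_mul, Complex.conj_ofReal]
      have hba : ((b/a : ℝ) : ℂ) * ((a/b : ℝ) : ℂ) = 1 := by
        have hba' : (b/a) * (a/b) = 1 := by
          field_simp
        rw [← Complex.ofReal_mul, hba', Complex.ofReal_one]
      calc ((b/a : ℝ) : ℂ) * v (T.parent t) * (((a/b : ℝ) : ℂ) * (starRingEnd ℂ) (v t))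
          = (((b/a : ℝ) : ℂ) * ((a/b : ℝ) : ℂ)) * (v (T.parent t) * (starRingEnd ℂ) (v t)) := by ring
        _ = v (T.parent t) * (starRingEnd ℂ) (v t) := by rw [hba, one_mul]
    rw [h3, Complex.normSq_mul, Complex.normSq_mul, Complex.normSq_ofReal,
      Complex.normSq_ofReal] at h2
    have hq1 : b/a * (b/a) = m t / m (T.parent t) := by
      field_simp
      nlinarith [ha2, hb2]
    have hq2 : a/b * (a/b) = m (T.parent t) / m t := by
      field_simp
      nlinarith [ha2, hb2]
    rw [hq1, hq2] at h2
    have h4 := mul_nonneg hl.le h2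
    have h5 : lam t * (m t / m (T.parent t) * Complex.normSq (v (T.parent t))
          + m (T.parent t) / m t * Complex.normSq (v t)
          + 2 * (v (T.parent t) * (starRingEnd ℂ) (v t)).re)
        = lam t * m t / m (T.parent t) * Complex.normSq (v (T.parent t))
          + lam t * (m (T.parent t) / m t) * Complex.normSq (v t)
          + lam t * (2 * (v (T.parent t) * (starRingEnd ℂ) (v t)).re) := by ring
    linarith [h5 ▸ h4]
  have step1 : (∑ t ∈ P, -(lam t * m t / m (T.parent t) * Complex.normSq (v (T.parent t))
        + lam t * (m (T.parent t) / m t) * Complex.normSq (v t)))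
      + ∑ t ∈ S, beta t * Complex.normSq (v t) ≤ r := by
    rw [hrdef]
    have := Finset.sum_le_sum key
    linarith
  -- rearrange the parent-square sum
  set h : T.V → ℝ := fun y => lam y * m y / m (T.parent y) * Complex.normSq (v (T.parent y))
    with hhdef
  have hYle : (∑ t ∈ P, h t) ≤ ∑ z ∈ S, (∑ y ∈ T.children z, lam y * m y) / m z * Complex.normSq (v z) := by
    have hY' : (∑ z ∈ S, (∑ y ∈ T.children z, lam y * m y) / m z * Complex.normSq (v z))
        = ∑ y ∈ U, h y := by
      have hdisj : (S : Set T.V).PairwiseDisjoint T.children := by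
        intro a _ b _ hab
        simp only [Finset.disjoint_left]
        intro y hya hyb
        exact hab (((T.mem_children a y).mp hya).symm.trans ((T.mem_children b y).mp hyb))
      rw [hUdef, Finset.sum_biUnion hdisj]
      apply Finset.sum_congr rfl
      intro z _
      rw [Finset.sum_div, Finset.sum_mul]
      apply Finset.sum_congr rfl
      intro y hy
      rw [hhdef]
      simp only
      rw [(T.mem_children z y).mp hy]
    rw [hY']
    apply Finset.sum_le_sum_of_subset_of_nonneg hPU
    intro y _ _
    simp only [hhdef]
    exact mul_nonneg (div_nonneg (mul_nonneg (hlam y).le (hm y).le)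
      (hm (T.parent y)).le) (Complex.normSq_nonneg _)
  have hXle : (∑ t ∈ P, lam t * (m (T.parent t) / m t) * Complex.normSq (v t))
      ≤ ∑ t ∈ S, lam t * (m (T.parent t) / m t) * Complex.normSq (v t) := by
    apply Finset.sum_le_sum_of_subset_of_nonneg hPS
    intro t _ _
    exact mul_nonneg (mul_nonneg (hlam t).le
      (div_nonneg (hm (T.parent t)).le (hm t).le)) (Complex.normSq_nonneg _)
  have hfinal : (0:ℝ) ≤ (∑ t ∈ S, beta t * Complex.normSq (v t))
      - (∑ t ∈ S, lam t * (m (T.parent t) / m t) * Complex.normSq (v t))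
      - ∑ z ∈ S, (∑ y ∈ T.children z, lam y * m y) / m z * Complex.normSq (v z) := by
    rw [← Finset.sum_sub_distrib, ← Finset.sum_sub_distrib]
    apply Finset.sum_nonneg
    intro t _
    have hmt := hm t
    have hmp := hm (T.parent t)
    have hi := hineq t
    have hns := Complex.normSq_nonneg (v t)
    have heq : beta t * Complex.normSq (v t)
        - lam t * (m (T.parent t) / m t) * Complex.normSq (v t)
        - (∑ y ∈ T.children t, lam y * m y) / m t * Complex.normSq (v t)
        = (Complex.normSq (v t) / m t)
          * (beta t * m t - (lam t * m (T.parent t) + ∑ y ∈ T.children t, lam y * m y)) := by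
      field_simp
      ring
    rw [heq]
    apply mul_nonneg (div_nonneg hns hmt.le)
    linarith
  -- combine
  have hsum_neg : (∑ t ∈ P, -(lam t * m t / m (T.parent t) * Complex.normSq (v (T.parent t))
        + lam t * (m (T.parent t) / m t) * Complex.normSq (v t)))
      = -((∑ t ∈ P, h t) + ∑ t ∈ P, lam t * (m (T.parent t) / m t) * Complex.normSq (v t)) := by
    rw [← Finset.sum_add_distrib, ← Finset.sum_neg_distrib]
  rw [hsum_neg] at step1
  linarith
end

section
/- If the Jacobi operator J on a one-ended levelled tree Γ is positive semidefinite on finitely supported functions, then there exists a strictly positive function m on Γ with β_x m(x) = λ_x m(x') + Σ_{y∈N_x} λ_y m(y) for every vertex x. -/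
namespace JTreeAux
open Finset

variable {T : JTree}

lemma level_iterate (t : T.V) (k : ℕ) : T.level (T.parent^[k] t) = T.level t + k := by
  induction k generalizing t with
  | zero => simp
  | succ n ih =>
      rw [Function.iterate_succ_apply, ih, T.level_parent]
      omega

lemma descend_refl (x : T.V) : T.descend x x := ⟨0, rfl⟩

lemma descend_level {t x : T.V} (h : T.descend t x) : T.level t ≤ T.level x := by
  obtain ⟨k, hk⟩ := h
  have h2 := level_iterate t k
  rw [hk] at h2; omega

lemma descend_eq_of_level {t x : T.V} (h : T.descend t x) (hl : T.level x ≤ T.level t) :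
    t = x := by
  obtain ⟨k, hk⟩ := h
  have h2 := level_iterate t k
  rw [hk] at h2
  have : k = 0 := by omega
  subst this; simpa using hk

lemma descend_trans {s t x : T.V} (h1 : T.descend s t) (h2 : T.descend t x) :
    T.descend s x := by
  obtain ⟨k, hk⟩ := h1; obtain ⟨j, hj⟩ := h2
  exact ⟨j + k, by rw [Function.iterate_add_apply, hk, hj]⟩

lemma descend_parent {t x : T.V} (h : T.descend t x) (hne : t ≠ x) :
    T.descend (T.parent t) x := by
  obtain ⟨k, hk⟩ := h
  cases k with
  | zero => exact absurd hk hne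
  | succ n => exact ⟨n, by rw [← Function.iterate_succ_apply]; exact hk⟩

lemma parent_ne (z : T.V) : T.parent z ≠ z := by
  intro h
  have := T.level_parent z
  rw [h] at this; omega

lemma child_ne {y x : T.V} (hy : y ∈ T.children x) : y ≠ x := by
  intro h
  have h1 := (T.mem_children x y).mp hy
  have h2 := T.level_parent y
  rw [h1, h] at h2
  omega

lemma child_descend {y x : T.V} (hy : y ∈ T.children x) : T.descend y x :=
  ⟨1, by simpa using (T.mem_children x y).mp hy⟩

lemma descend_child {y t x : T.V} (hy : y ∈ T.children t) (h : T.descend t x) :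
    T.descend y x := descend_trans (child_descend hy) h

noncomputable def S (x : T.V) : Finset T.V := (T.subtree_finite x).toFinset

lemma mem_S {t x : T.V} : t ∈ S x ↔ T.descend t x := by
  simp [S, Set.Finite.mem_toFinset, JTree.descend]

lemma S_card_lt {t x : T.V} (h : T.descend t x) (hne : t ≠ x) :
    (S t).card < (S x).card := by
  apply Finset.card_lt_card
  rw [Finset.ssubset_def]
  constructor
  · intro s hs
    rw [mem_S] at *
    exact descend_trans hs h
  · intro hsub
    have hx : x ∈ S t := hsub (mem_S.mpr (descend_refl x))
    rw [mem_S] at hx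
    exact hne (descend_eq_of_level hx (descend_level h)).symm

lemma child_card_lt {y x : T.V} (hy : y ∈ T.children x) : (S y).card < (S x).card :=
  S_card_lt (child_descend hy) (child_ne hy)

end JTreeAux

namespace JTreeAux
open Finset

noncomputable def cfun (T : JTree) (lam beta : T.V → ℝ) : T.V → ℝ :=
  fun x =>
    lam x / (beta x - ∑ y ∈ (T.children x).attach, lam y.1 * cfun T lam beta y.1)
termination_by x => (S x).card
decreasing_by exact child_card_lt y.2

noncomputable def Dfun (T : JTree) (lam beta : T.V → ℝ) (x : T.V) : ℝ :=
  beta x - ∑ y ∈ T.children x, lam y * cfun T lam beta y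

lemma cfun_eq (T : JTree) (lam beta : T.V → ℝ) (x : T.V) :
    cfun T lam beta x = lam x / Dfun T lam beta x := by
  rw [cfun, Dfun, ← Finset.sum_attach (T.children x) (fun y => lam y * cfun T lam beta y)]

noncomputable def Jr (T : JTree) (lam beta : T.V → ℝ) (v : T.V → ℝ) (t : T.V) : ℝ :=
  lam t * v (T.parent t) + beta t * v t + ∑ y ∈ T.children t, lam y * v y

lemma jacobi_coe (T : JTree) (lam beta : T.V → ℝ) (v : T.V → ℝ) (t : T.V) :
    T.jacobi lam beta (fun s => (v s : ℂ)) t = ((Jr T lam beta v t : ℝ) : ℂ) := by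
  simp only [JTree.jacobi, Jr]
  push_cast
  ring

lemma hposR (T : JTree) (lam beta : T.V → ℝ)
    (hpos : ∀ v : T.V → ℂ, {t : T.V | v t ≠ 0}.Finite →
      0 ≤ (∑' t : T.V, T.jacobi lam beta v t * (starRingEnd ℂ) (v t)).re)
    (F : Finset T.V) (v : T.V → ℝ) (hv : ∀ t ∉ F, v t = 0) :
    0 ≤ ∑ t ∈ F, Jr T lam beta v t * v t := by
  have hfin : {t : T.V | (fun s => ((v s : ℝ) : ℂ)) t ≠ 0}.Finite := by
    apply Set.Finite.subset F.finite_toSet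
    intro t ht
    simp only [Set.mem_setOf_eq, ne_eq, Complex.ofReal_eq_zero] at ht
    by_contra h
    exact ht (hv t h)
  have h0 := hpos (fun s => (v s : ℂ)) hfin
  have hsum : (∑' t : T.V, T.jacobi lam beta (fun s => (v s : ℂ)) t *
      (starRingEnd ℂ) ((fun s => ((v s : ℝ) : ℂ)) t))
      = ((∑ t ∈ F, Jr T lam beta v t * v t : ℝ) : ℂ) := by
    rw [tsum_eq_sum (s := F) (fun t ht => by simp [hv t ht])]
    rw [Complex.ofReal_sum]
    apply Finset.sum_congr rfl
    intro t _
    rw [jacobi_coe]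
    simp only []
    rw [Complex.conj_ofReal, ← Complex.ofReal_mul]
  rw [hsum] at h0
  simpa using h0

end JTreeAux

namespace JTreeAux
open Finset

lemma Dpos (T : JTree) (lam beta : T.V → ℝ) (hlam : ∀ t, 0 < lam t)
    (hpos : ∀ v : T.V → ℂ, {t : T.V | v t ≠ 0}.Finite →
      0 ≤ (∑' t : T.V, T.jacobi lam beta v t * (starRingEnd ℂ) (v t)).re) :
    ∀ x : T.V, 0 < Dfun T lam beta x := by
  suffices H : ∀ n (x : T.V), (S x).card < n → 0 < Dfun T lam beta x by
    exact fun x => H ((S x).card + 1) x (Nat.lt_succ_self _)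
  intro n
  induction n with
  | zero => intro x hx; omega
  | succ n ih =>
    intro x hx
    classical
    have IH : ∀ t, T.descend t x → t ≠ x → 0 < Dfun T lam beta t := fun t ht hne =>
      ih t (lt_of_lt_of_le (S_card_lt ht hne) (Nat.lt_succ_iff.mp hx))
    set u : T.V → ℝ := fun t =>
      if T.descend t x then
        ∏ i ∈ Finset.range (T.level x - T.level t), cfun T lam beta (T.parent^[i] t)
      else 0 with hu
    have hux : u x = 1 := by
      simp only [hu]
      rw [if_pos (descend_refl x)]
      simp
    have hu0 : ∀ t, ¬ T.descend t x → u t = 0 := by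
      intro t h; simp only [hu]; rw [if_neg h]
    have hustep : ∀ t, T.descend t x → t ≠ x →
        u t = cfun T lam beta t * u (T.parent t) := by
      intro t ht hne
      have hpt : T.descend (T.parent t) x := descend_parent ht hne
      have hlt : T.level t < T.level x := by
        rcases lt_or_eq_of_le (descend_level ht) with h | h
        · exact h
        · exact absurd (descend_eq_of_level ht h.ge) hne
      have hk : T.level x - T.level t = (T.level x - T.level (T.parent t)) + 1 := by
        have := T.level_parent t; omega
      simp only [hu]
      rw [if_pos ht, if_pos hpt, hk, Finset.prod_range_succ']
      simp only [Function.iterate_succ_apply, Function.iterate_zero_apply]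
      ring
    have hsx : ∀ z : T.V, T.descend z x → T.parent z = T.parent x → z = x := by
      intro z hz hpz
      apply descend_eq_of_level hz
      have h1 := T.level_parent z
      have h2 := T.level_parent x
      rw [hpz] at h1; omega
    set w : T.V → ℝ := fun t => (-1 : ℝ)^(T.level t) * u t with hw
    have hwdef : ∀ t, w t = (-1 : ℝ)^(T.level t) * u t := fun t => rfl
    have hw0 : ∀ t, ¬ T.descend t x → w t = 0 := by
      intro t h; rw [hwdef, hu0 t h, mul_zero]
    have hJw : ∀ t, T.descend t x → t ≠ x → Jr T lam beta w t = 0 := by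
      intro t ht hne
      have hDt := IH t ht hne
      have hchild : ∀ y ∈ T.children t,
          lam y * w y = (lam y * cfun T lam beta y) * (-((-1:ℝ)^(T.level t)) * u t) := by
        intro y hy
        have hyd : T.descend y x := descend_child hy ht
        have hyne : y ≠ x := by
          intro h
          have h2 := T.level_parent y
          rw [(T.mem_children t y).mp hy] at h2
          have h1 := descend_level ht
          subst h
          omega
        have hlvl : T.level t = T.level y + 1 := by
          have h2 := T.level_parent y
          rw [(T.mem_children t y).mp hy] at h2
          omega
        rw [hwdef, hustep y hyd hyne, (T.mem_children t y).mp hy, hlvl, pow_succ]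
        ring
      have hwpt : w (T.parent t) = -((-1:ℝ)^(T.level t)) * u (T.parent t) := by
        rw [hwdef, T.level_parent, pow_succ]; ring
      have hDu : Dfun T lam beta t * u t = lam t * u (T.parent t) := by
        rw [hustep t ht hne, cfun_eq]
        field_simp
      simp only [Jr]
      rw [hwpt, hwdef t, Finset.sum_congr rfl hchild, ← Finset.sum_mul]
      simp only [Dfun] at hDu
      linear_combination ((-1:ℝ)^(T.level t)) * hDu
    -- now the boundary vertex p
    set p := T.parent x with hp
    have hlevp : T.level p = T.level x + 1 := by rw [hp]; exact T.level_parent x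
    have hpnotS : ¬ T.descend p x := by
      intro h
      have := descend_level h
      omega
    have hppnot : ¬ T.descend (T.parent p) x := by
      intro h
      have h1 := descend_level h
      have h3 := T.level_parent p
      omega
    have hxp : x ≠ p := by
      intro h
      rw [← h] at hlevp; omega
    have hxchp : x ∈ T.children p := (T.mem_children p x).mpr hp.symm
    have hwp : w p = 0 := hw0 p hpnotS
    have hsib : ∀ z ∈ T.children p, z ≠ x → w z = 0 := by
      intro z hz hzx
      apply hw0
      intro hzd
      exact hzx (hsx z hzd (((T.mem_children p z).mp hz).trans hp))
    have hsq : ((-1:ℝ)^(T.level x)) * ((-1:ℝ)^(T.level x)) = 1 := by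
      rw [← pow_add]
      exact Even.neg_one_pow ⟨T.level x, rfl⟩
    have key : ∀ s : ℝ, 0 ≤ beta p * (s * s) + (2 * lam x * ((-1:ℝ)^(T.level x))) * s
        + Dfun T lam beta x := by
      intro s
      set v : T.V → ℝ := fun t => w t + s * (if t = p then 1 else 0) with hv
      have hvdef : ∀ t, v t = w t + s * (if t = p then 1 else 0) := fun t => rfl
      have hvw : ∀ t, t ≠ p → v t = w t := by
        intro t ht; rw [hvdef t, if_neg ht, mul_zero, add_zero]
      have hsupp : ∀ t ∉ insert p (S x), v t = 0 := by
        intro t ht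
        simp only [Finset.mem_insert, not_or] at ht
        rw [hvw t ht.1, hw0 t (fun h => ht.2 (mem_S.mpr h))]
      have h0 := hposR T lam beta hpos (insert p (S x)) v hsupp
      rw [Finset.sum_insert (fun h => hpnotS (mem_S.mp h))] at h0
      have hvp : v p = s := by rw [hvdef, hwp, if_pos rfl, zero_add, mul_one]
      have hvpp : v (T.parent p) = 0 := by
        rw [hvw _ (parent_ne p), hw0 _ hppnot]
      have hvx : v x = (-1:ℝ)^(T.level x) := by
        rw [hvw x hxp, hwdef, hux, mul_one]
      have hsump : ∑ y ∈ T.children p, lam y * v y = lam x * ((-1:ℝ)^(T.level x)) := by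
        rw [Finset.sum_eq_single_of_mem x hxchp]
        · rw [hvx]
        · intro z hz hzx
          rw [hvw z (child_ne hz), hsib z hz hzx, mul_zero]
      have hJvp : Jr T lam beta v p = beta p * s + lam x * ((-1:ℝ)^(T.level x)) := by
        simp only [Jr]
        rw [hvpp, hvp, hsump]; ring
      have hSsum : ∑ t ∈ S x, Jr T lam beta v t * v t
          = (lam x * s + ((-1:ℝ)^(T.level x)) * Dfun T lam beta x) * ((-1:ℝ)^(T.level x)) := by
        rw [Finset.sum_eq_single_of_mem x (mem_S.mpr (descend_refl x))]
        · have hchsum : ∑ y ∈ T.children x, lam y * v y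
              = -((-1:ℝ)^(T.level x)) * ∑ y ∈ T.children x, lam y * cfun T lam beta y := by
            rw [Finset.mul_sum]
            apply Finset.sum_congr rfl
            intro y hy
            have hyd : T.descend y x := child_descend hy
            have hyne : y ≠ x := child_ne hy
            have hlvl : T.level x = T.level y + 1 := by
              have h2 := T.level_parent y
              rw [(T.mem_children x y).mp hy] at h2; omega
            have hyp : y ≠ p := by
              intro h
              rw [h] at hlvl; omega
            rw [hvw y hyp, hwdef, hustep y hyd hyne, (T.mem_children x y).mp hy, hux,
              hlvl, pow_succ]
            ring
          simp only [Jr]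
          rw [← hp, hvx, hvp, hchsum]
          simp only [Dfun]
          ring
        · intro t ht htx
          rw [mem_S] at ht
          have htp : t ≠ p := fun h => hpnotS (h ▸ ht)
          have hptp : T.parent t ≠ p := by
            intro h
            exact htx (hsx t ht (h.trans hp))
          have hJvt : Jr T lam beta v t = Jr T lam beta w t := by
            simp only [Jr]
            rw [hvw t htp, hvw _ hptp]
            congr 1
            apply Finset.sum_congr rfl
            intro y hy
            have : y ≠ p := fun h => hpnotS (h ▸ descend_child hy ht)
            rw [hvw y this]
          rw [hJvt, hJw t ht htx, zero_mul]
      rw [hJvp, hvp, hSsum] at h0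
      have hexp : (beta p * s + lam x * ((-1:ℝ)^(T.level x))) * s
          + (lam x * s + ((-1:ℝ)^(T.level x)) * Dfun T lam beta x) * ((-1:ℝ)^(T.level x))
          = beta p * (s * s) + (2 * lam x * ((-1:ℝ)^(T.level x))) * s + Dfun T lam beta x := by
        linear_combination (Dfun T lam beta x) * hsq
      rw [hexp] at h0
      exact h0
    have hbp : 0 ≤ beta p := by
      have h0 := hposR T lam beta hpos {p} (fun t => if t = p then 1 else 0)
        (by intro t ht; simp only [Finset.mem_singleton] at ht; simp [ht])
      rw [Finset.sum_singleton] at h0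
      have h1 : Jr T lam beta (fun t => if t = p then (1:ℝ) else 0) p = beta p := by
        have hz : (∑ y ∈ T.children p, lam y * (if y = p then (1:ℝ) else 0)) = 0 :=
          Finset.sum_eq_zero (fun y hy => by rw [if_neg (child_ne hy), mul_zero])
        simp only [Jr]
        rw [hz, if_neg (parent_ne p)]
        simp
      rw [h1] at h0
      simpa using h0
    have hdisc := discrim_le_zero key
    rw [discrim] at hdisc
    nlinarith [hdisc, hsq, hbp, hlam x, mul_pos (hlam x) (hlam x)]

end JTreeAux

namespace JTreeAux
open Finset

noncomputable def Pfun (T : JTree) (lam beta : T.V → ℝ) (t : T.V) (k : ℕ) : ℝ :=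
  ∏ i ∈ Finset.range k, cfun T lam beta (T.parent^[i] t)

lemma Pfun_add (T : JTree) (lam beta : T.V → ℝ) (t : T.V) (k d : ℕ) :
    Pfun T lam beta t (k + d)
      = Pfun T lam beta t k * Pfun T lam beta (T.parent^[k] t) d := by
  simp only [Pfun]
  rw [Finset.prod_range_add]
  congr 1
  apply Finset.prod_congr rfl
  intro i _
  rw [add_comm k i, Function.iterate_add_apply]

lemma Pfun_succ (T : JTree) (lam beta : T.V → ℝ) (t : T.V) (k : ℕ) :
    Pfun T lam beta t (k + 1)
      = cfun T lam beta t * Pfun T lam beta (T.parent t) k := by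
  simp only [Pfun]
  rw [Finset.prod_range_succ']
  simp only [Function.iterate_succ_apply, Function.iterate_zero_apply]
  ring

end JTreeAux


/-- If the Jacobi operator is positive semidefinite on finitely supported functions,
then there is a strictly positive function `m` on `Γ` with
`β_x m(x) = λ_x m(x') + Σ_{y∈N_x} λ_y m(y)` for every vertex `x`. -/
theorem stmt_11 (T : JTree) (lam beta : T.V → ℝ) (hlam : ∀ t, 0 < lam t)
    (hpos : ∀ v : T.V → ℂ, {t : T.V | v t ≠ 0}.Finite →
      0 ≤ (∑' t : T.V, T.jacobi lam beta v t * (starRingEnd ℂ) (v t)).re) :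
    ∃ m : T.V → ℝ, (∀ t, 0 < m t) ∧
      ∀ t, beta t * m t = lam t * m (T.parent t) + ∑ y ∈ T.children t, lam y * m y := by
  classical
  have hD := JTreeAux.Dpos T lam beta hlam hpos
  have hc : ∀ t, 0 < JTreeAux.cfun T lam beta t := by
    intro t
    rw [JTreeAux.cfun_eq]
    exact div_pos (hlam t) (hD t)
  by_cases hne : Nonempty T.V
  · obtain ⟨o⟩ := hne
    have hPpos : ∀ t k, 0 < JTreeAux.Pfun T lam beta t k := fun t k =>
      Finset.prod_pos (fun i _ => hc _)
    -- well-definedness of the glued function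
    have main : ∀ (t : T.V) (k l k' l' : ℕ), k ≤ k' →
        T.parent^[k] t = T.parent^[l] o → T.parent^[k'] t = T.parent^[l'] o →
        JTreeAux.Pfun T lam beta t k / JTreeAux.Pfun T lam beta o l
          = JTreeAux.Pfun T lam beta t k' / JTreeAux.Pfun T lam beta o l' := by
      intro t k l k' l' hkk h1 h2
      have e1 := JTreeAux.level_iterate t k
      have e2 := JTreeAux.level_iterate t k'
      have e3 := JTreeAux.level_iterate o l
      have e4 := JTreeAux.level_iterate o l'
      rw [h1] at e1
      rw [h2] at e2
      have hll : l ≤ l' := by omega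
      have hd : k' = k + (k' - k) := by omega
      have hd' : l' = l + (k' - k) := by omega
      rw [hd] at h2 ⊢
      rw [hd'] at h2 ⊢
      rw [JTreeAux.Pfun_add, JTreeAux.Pfun_add, h1]
      rw [mul_div_mul_right _ _ (ne_of_gt (hPpos _ _))]
    have hwd : ∀ (t : T.V) (k l k' l' : ℕ),
        T.parent^[k] t = T.parent^[l] o → T.parent^[k'] t = T.parent^[l'] o →
        JTreeAux.Pfun T lam beta t k / JTreeAux.Pfun T lam beta o l
          = JTreeAux.Pfun T lam beta t k' / JTreeAux.Pfun T lam beta o l' := by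
      intro t k l k' l' h1 h2
      rcases le_total k k' with h | h
      · exact main t k l k' l' h h1 h2
      · exact (main t k' l' k l h h2 h1).symm
    choose K L hKL using fun t => T.connected t o
    set m : T.V → ℝ := fun t => JTreeAux.Pfun T lam beta t (K t) / JTreeAux.Pfun T lam beta o (L t) with hm
    have hmdef : ∀ t, m t = JTreeAux.Pfun T lam beta t (K t) / JTreeAux.Pfun T lam beta o (L t) :=
      fun t => rfl
    have hmpos : ∀ t, 0 < m t := fun t => div_pos (hPpos _ _) (hPpos _ _)
    have hstep : ∀ t, m t = JTreeAux.cfun T lam beta t * m (T.parent t) := by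
      intro t
      have h1 : T.parent^[K (T.parent t) + 1] t = T.parent^[L (T.parent t)] o := by
        rw [Function.iterate_succ_apply]
        exact hKL (T.parent t)
      rw [hmdef t, hwd t (K t) (L t) (K (T.parent t) + 1) (L (T.parent t)) (hKL t) h1,
        JTreeAux.Pfun_succ, mul_div_assoc]
    refine ⟨m, hmpos, ?_⟩
    intro t
    have hDt := hD t
    have h1 : lam t * m (T.parent t) = JTreeAux.Dfun T lam beta t * m t := by
      rw [hstep t, JTreeAux.cfun_eq]
      field_simp
    have h2 : ∀ y ∈ T.children t, lam y * m y = (lam y * JTreeAux.cfun T lam beta y) * m t := by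
      intro y hy
      rw [hstep y, (T.mem_children t y).mp hy]
      ring
    rw [Finset.sum_congr rfl h2, ← Finset.sum_mul, h1]
    simp only [JTreeAux.Dfun]
    ring
  · exact ⟨fun _ => 1, fun t => (hne ⟨t⟩).elim, fun t => (hne ⟨t⟩).elim⟩
end

section
/- For each vertex x of a one-ended levelled tree, the polynomials P_{x,x} and P_{x,x'} associated to the Jacobi operator have only real, simple zeros; deg P_{x,x'} = deg P_{x,x} + 1, and the zeros of P_{x,x} strictly interlace the zeros of P_{x,x'}: if t_1 < ⋯ < t_n are the zeros of P_{x,x'} then P_{x,x} has n−1 zeros s_1 < ⋯ < s_{n−1} with t_1 < s_1 < t_2 < ⋯ < s_{n−1} < t_n. -/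
open Polynomial Finset

section Sign

variable {R : Type*} [CommRing R] [LinearOrder R] [IsStrictOrderedRing R]

lemma neg_one_pow_card_mul_prod_pos {α : Type*} (s : Finset α) {f : α → R}
    (h : ∀ a ∈ s, f a < 0) : 0 < (-1 : R) ^ #s * ∏ a ∈ s, f a := by
  rw [← prod_const, ← prod_mul_distrib]
  exact prod_pos fun a ha => by simpa using h a ha

lemma neg_one_pow_card_filter_lt_mul_prod_sub_pos (Q : Finset R) {u : R} (hu : u ∉ Q) :
    0 < (-1 : R) ^ #(Q.filter (u < ·)) * ∏ r ∈ Q, (u - r) := by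
  rw [← prod_filter_mul_prod_filter_not Q (u < ·), ← mul_assoc]
  refine mul_pos (neg_one_pow_card_mul_prod_pos _ fun r hr => ?_) (prod_pos fun r hr => ?_)
  · exact sub_neg.2 (mem_filter.1 hr).2
  · obtain ⟨hrQ, hur⟩ := mem_filter.1 hr
    exact sub_pos.2 ((not_lt.1 hur).lt_of_ne (ne_of_mem_of_not_mem hrQ hu))

lemma mul_pos_iff_of_neg_one_pow_mul_pos {k : ℕ} {a b : R} (hb : 0 < (-1 : R) ^ k * b) :
    0 < a * b ↔ 0 < (-1 : R) ^ k * a := by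
  have : a * b = (-1 : R) ^ k * a * ((-1) ^ k * b) := by
    rw [mul_mul_mul_comm, ← mul_pow]; simp
  rw [this, mul_pos_iff_of_pos_right hb]

end Sign

lemma Fin.card_filter_le_val (k j : ℕ) :
    #(univ.filter fun i : Fin k => j ≤ (i : ℕ)) = k - j := by
  have h := card_filter_add_card_filter_not (s := (univ : Finset (Fin k))) fun i => j ≤ (i : ℕ)
  simp only [not_le, Fin.card_filter_val_lt, card_univ, Fintype.card_fin] at h
  omega

section Count

variable {α : Type*} [LinearOrder α]

lemma card_filter_lt_erase [DecidableEq α] (Q : Finset α) (u : α) :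
    #((Q.erase u).filter (u < ·)) = #(Q.filter (u < ·)) := by
  rw [filter_erase, erase_eq_of_notMem (by simp)]

lemma card_filter_lt_image {k : ℕ} {t : Fin k → α} (ht : Function.Injective t) {x : α} {j : ℕ}
    (h : ∀ i, x < t i ↔ j ≤ (i : ℕ)) : #((univ.image t).filter (x < ·)) = k - j := by
  rw [filter_image, card_image_of_injective _ ht, ← Fin.card_filter_le_val k j]
  simp only [h]

lemma card_filter_lt_image_self {k : ℕ} {t : Fin k → α} (ht : StrictMono t) (j : Fin k) :
    #((univ.image t).filter (t j < ·)) = k - (j + 1) :=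
  card_filter_lt_image ht.injective fun _ => ht.lt_iff_lt

lemma card_filter_lt_of_mem_Ioo {N : ℕ} {z : Fin (N + 1) → α} (hz : StrictMono z) {j : Fin N}
    {x : α} (hx : x ∈ Set.Ioo (z j.castSucc) (z j.succ)) :
    #((univ.image z).filter (x < ·)) = N - j := by
  rw [card_filter_lt_image hz.injective (j := j + 1), Nat.add_sub_add_right]
  refine fun i => ⟨fun hxi => ?_, fun hi => hx.2.trans_le (hz.monotone hi)⟩
  by_contra hi
  exact (hx.1.trans hxi).not_ge (hz.monotone (Fin.le_def.2 (by simp; omega)))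

lemma card_filter_lt_insert_insert {R : Finset α} {a b x : α} (hb : b ∉ R) (hax : a < x)
    (hxb : x < b) : #((insert a (insert b R)).filter (x < ·)) = #(R.filter (x < ·)) + 1 := by
  rw [filter_insert, if_neg hax.not_gt, filter_insert, if_pos hxb,
    card_insert_of_notMem fun h => hb (mem_filter.1 h).1]

end Count

lemma eq_C_leadingCoeff_mul_prod_X_sub_C {R : Type*} [CommRing R] [IsDomain R] {f : R[X]}
    (hf : f ≠ 0) {S : Finset R} (hS : ∀ s ∈ S, f.IsRoot s) (hdeg : f.natDegree ≤ #S) :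
    f = C f.leadingCoeff * ∏ s ∈ S, (X - C s) := by
  have hle : S.val ≤ f.roots :=
    (Multiset.le_iff_subset S.nodup).2 fun s hs => (mem_roots hf).2 (hS s hs)
  have hroots : f.roots = S.val :=
    (Multiset.eq_of_le_of_card_le hle ((card_roots' f).trans hdeg)).symm
  have hcard : Multiset.card f.roots = f.natDegree :=
    le_antisymm (card_roots' f) (by rw [hroots]; exact hdeg)
  conv_lhs => rw [← C_leadingCoeff_mul_prod_multiset_X_sub_C hcard, hroots]
  rfl

lemma exists_isRoot_mem_Ioo (f : ℝ[X]) {a b : ℝ} (hab : a ≤ b)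
    (h : f.eval a * f.eval b < 0) : ∃ x ∈ Set.Ioo a b, f.IsRoot x := by
  have hf : ContinuousOn (fun x => f.eval x) (Set.Icc a b) := f.continuous.continuousOn
  rcases mul_neg_iff.1 h with ⟨ha, hb⟩ | ⟨ha, hb⟩
  · exact intermediate_value_Ioo' hab hf ⟨hb, ha⟩
  · exact intermediate_value_Ioo hab hf ⟨ha, hb⟩

lemma exists_gt_eval_pos {f : ℝ[X]} (hdeg : 0 < f.degree) (hf : 0 < f.leadingCoeff) (a : ℝ) :
    ∃ x, a < x ∧ 0 < f.eval x :=
  (((f.tendsto_atTop_of_leadingCoeff_nonneg hdeg hf.le).eventually_gt_atTop 0).and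
    (Filter.eventually_gt_atTop a)).exists.imp fun _ h => h.symm

lemma exists_lt_neg_one_pow_mul_eval_pos {f : ℝ[X]} (hdeg : 0 < f.degree)
    (hf : 0 < f.leadingCoeff) (a : ℝ) : ∃ x, x < a ∧ 0 < (-1 : ℝ) ^ f.natDegree * f.eval x := by
  set g := C ((-1 : ℝ) ^ f.natDegree) * f.comp (-X)
  have hunit : (-1 : ℝ) ^ f.natDegree * (-1) ^ f.natDegree = 1 := by rw [← mul_pow]; simp
  have hgdeg : 0 < g.degree := by
    rwa [degree_C_mul (pow_ne_zero _ (by norm_num)), degree_comp_neg_X]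
  have hglc : 0 < g.leadingCoeff := by
    rwa [leadingCoeff_mul, leadingCoeff_C, comp_neg_X_leadingCoeff_eq, ← mul_assoc, hunit, one_mul]
  obtain ⟨y, hy, hgy⟩ := exists_gt_eval_pos hgdeg hglc (-a)
  refine ⟨-y, by linarith, ?_⟩
  simpa [g] using hgy

theorem exists_interlacing_roots_of_alternating {f : ℝ[X]} {N : ℕ} {z : Fin (N + 1) → ℝ}
    (hz : StrictMono z) (hsign : ∀ j : Fin (N + 1), 0 < (-1 : ℝ) ^ (N - j : ℕ) * f.eval (z j)) :
    ∃ s : Fin N → ℝ, StrictMono s ∧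
      ∀ j, s j ∈ Set.Ioo (z j.castSucc) (z j.succ) ∧ f.IsRoot (s j) := by
  have hroot (j : Fin N) : ∃ x ∈ Set.Ioo (z j.castSucc) (z j.succ), f.IsRoot x := by
    refine exists_isRoot_mem_Ioo f (hz Fin.castSucc_lt_succ).le ?_
    have hcast := hsign j.castSucc
    rw [Fin.val_castSucc, show N - j = N - (j + 1) + 1 by omega, pow_succ, mul_neg_one, neg_mul,
      ← mul_neg] at hcast
    have hsucc := hsign j.succ
    rw [Fin.val_succ] at hsucc
    simpa using (mul_pos_iff_of_neg_one_pow_mul_pos hsucc).2 hcast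
  choose s hs hroot using hroot
  refine ⟨s, fun j j' hjj' => ?_, fun j => ⟨hs j, hroot j⟩⟩
  calc s j < z j.succ := (hs j).2
    _ ≤ z j'.castSucc := hz.monotone (Fin.succ_le_castSucc_iff.2 hjj')
    _ < s j' := (hs j').1

theorem exists_interlacing_factorization_of_alternating {f : ℝ[X]} {Z : Finset ℝ} {N : ℕ}
    (hZ : #Z = N + 1) (hsign : ∀ z ∈ Z, 0 < (-1 : ℝ) ^ #(Z.filter (z < ·)) * f.eval z)
    (hdeg : f.natDegree ≤ N) :
    ∃ s : Fin N → ℝ, StrictMono s ∧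
      (∀ j, s j ∈ Set.Ioo (Z.orderEmbOfFin hZ j.castSucc) (Z.orderEmbOfFin hZ j.succ) ∧
        f.IsRoot (s j)) ∧
      f = C f.leadingCoeff * ∏ r ∈ univ.image s, (X - C r) := by
  set z := Z.orderEmbOfFin hZ
  have hsign' (j : Fin (N + 1)) : 0 < (-1 : ℝ) ^ (N - j : ℕ) * f.eval (z j) := by
    have hcount : #(Z.filter (z j < ·)) = N - j := by
      rw [← Z.image_orderEmbOfFin_univ hZ, card_filter_lt_image_self z.strictMono]; omega
    simpa only [hcount] using hsign (z j) (Z.orderEmbOfFin_mem hZ j)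
  obtain ⟨s, hs, hroot⟩ := exists_interlacing_roots_of_alternating z.strictMono hsign'
  have hf : f ≠ 0 := by
    rintro rfl
    simpa using hsign' 0
  refine ⟨s, hs, hroot, eq_C_leadingCoeff_mul_prod_X_sub_C hf ?_ ?_⟩
  · simpa using fun j => (hroot j).2
  · rwa [card_image_of_injective _ hs.injective, card_univ, Fintype.card_fin]

lemma exists_eval_signs_outside {f : ℝ[X]} (hdeg : 0 < f.natDegree) (hlc : 0 < f.leadingCoeff)
    (R : Finset ℝ) : ∃ a b, (∀ r ∈ insert b R, a < r) ∧ (∀ r ∈ R, r < b) ∧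
      0 < (-1 : ℝ) ^ f.natDegree * f.eval a ∧ 0 < f.eval b := by
  have hdeg' : 0 < f.degree := natDegree_pos_iff_degree_pos.1 hdeg
  obtain ⟨M, hM⟩ := R.bddAbove
  obtain ⟨b, hMb, hb⟩ := exists_gt_eval_pos hdeg' hlc M
  obtain ⟨L, hL⟩ := (insert b R).bddBelow
  obtain ⟨a, haL, ha⟩ := exists_lt_neg_one_pow_mul_eval_pos hdeg' hlc L
  exact ⟨a, b, fun r hr => haL.trans_le (hL hr), fun r hr => (hM hr).trans_lt hMb, ha, hb⟩

theorem exists_interlacing_roots_of_sign_at_nodes {f : ℝ[X]} {R : Finset ℝ}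
    (hdeg : f.natDegree = #R + 1) (hlc : 0 < f.leadingCoeff)
    (hsign : ∀ u ∈ R, 0 < (-1 : ℝ) ^ (#(R.filter (u < ·)) + 1) * f.eval u) :
    ∃ S : Finset ℝ, #S = #R + 1 ∧ f = C f.leadingCoeff * ∏ s ∈ S, (X - C s) ∧
      ∀ s ∈ S, s ∉ R ∧ #(R.filter (s < ·)) = #(S.filter (s < ·)) := by
  obtain ⟨a, b, haR, hRb, ha, hb⟩ := exists_eval_signs_outside (by omega) hlc R
  have hbR : b ∉ R := fun h => (hRb b h).false
  set Z := insert a (insert b R)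
  have hZ : #Z = #R + 1 + 1 := by
    rw [card_insert_of_notMem fun h => (haR a h).false, card_insert_of_notMem hbR]
  have hZab (z) (hz : z ∈ Z) : a ≤ z ∧ z ≤ b := by
    rcases mem_insert.1 hz with rfl | hz
    · exact ⟨le_rfl, (haR b (mem_insert_self b R)).le⟩
    · exact ⟨(haR z hz).le, (mem_insert.1 hz).elim le_of_eq fun h => (hRb z h).le⟩
  have hsignZ (z) (hz : z ∈ Z) : 0 < (-1 : ℝ) ^ #(Z.filter (z < ·)) * f.eval z := by
    rcases mem_insert.1 hz with rfl | hz'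
    · rwa [filter_insert, if_neg (lt_irrefl z), filter_true_of_mem haR,
        card_insert_of_notMem hbR, ← hdeg]
    rcases mem_insert.1 hz' with rfl | hzR
    · simpa [filter_false_of_mem fun x hx => (hZab x hx).2.not_gt] using hb
    · rw [card_filter_lt_insert_insert hbR (haR z (mem_insert_of_mem hzR)) (hRb z hzR)]
      exact hsign z hzR
  obtain ⟨s, hs, hsZ, hf⟩ := exists_interlacing_factorization_of_alternating hZ hsignZ hdeg.le
  refine ⟨univ.image s, by simp [card_image_of_injective _ hs.injective], hf, ?_⟩
  simp only [mem_image, mem_univ, true_and, forall_exists_index, forall_apply_eq_imp_iff]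
  intro j
  refine ⟨fun hjR => (hsign _ hjR).ne' (by simp [(hsZ j).2.eq_zero]), ?_⟩
  have hZcount : #(Z.filter (s j < ·)) = #R + 1 - j := by
    rw [← Z.image_orderEmbOfFin_univ hZ]
    exact card_filter_lt_of_mem_Ioo (Z.orderEmbOfFin hZ).strictMono (hsZ j).1
  have hmem := (hsZ j).1
  rw [card_filter_lt_insert_insert hbR
    ((hZab _ (Z.orderEmbOfFin_mem hZ _)).1.trans_lt hmem.1)
    (hmem.2.trans_le (hZab _ (Z.orderEmbOfFin_mem hZ _)).2)] at hZcount
  rw [card_filter_lt_image_self hs]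
  omega

section Residue

variable {K : Type*} [Field K] [DecidableEq K]

/-- The residue at `u ∈ Q` of `p / ∏_{r ∈ Q} (X - r)`. -/
def residue (p : K[X]) (Q : Finset K) (u : K) : K :=
  p.eval u / ∏ r ∈ Q.erase u, (u - r)

lemma residue_C_mul (c : K) (p : K[X]) (Q : Finset K) (u : K) :
    residue (C c * p) Q u = c * residue p Q u := by
  simp [residue, mul_div_assoc]

lemma residue_sum {ι : Type*} (S : Finset ι) (f : ι → K[X]) (Q : Finset K) (u : K) :
    residue (∑ y ∈ S, f y) Q u = ∑ y ∈ S, residue (f y) Q u := by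
  simp [residue, eval_finsetSum, sum_div]

lemma residue_prod_sdiff_mul_of_mem (p : K[X]) {Q R : Finset K} (hQR : Q ⊆ R) {u : K}
    (hu : u ∈ Q) : residue ((∏ r ∈ R \ Q, (X - C r)) * p) R u = residue p Q u := by
  have hsplit : R.erase u \ Q.erase u = R \ Q := by
    ext r
    simp only [mem_sdiff, mem_erase]
    constructor
    · rintro ⟨⟨hru, hr⟩, hrQ⟩
      exact ⟨hr, fun h => hrQ ⟨hru, h⟩⟩
    · rintro ⟨hr, hrQ⟩
      exact ⟨⟨by rintro rfl; exact hrQ hu, hr⟩, fun h => hrQ h.2⟩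
  have hne : ∏ r ∈ R \ Q, (u - r) ≠ 0 :=
    prod_ne_zero_iff.2 fun r hr => sub_ne_zero.2 fun h => (mem_sdiff.1 hr).2 (h ▸ hu)
  rw [residue, residue, ← prod_sdiff (erase_subset_erase u hQR), hsplit]
  simp [eval_prod, mul_div_mul_left _ _ hne]

lemma residue_prod_sdiff_mul_of_notMem (p : K[X]) {Q R : Finset K} {u : K} (hu : u ∈ R)
    (huQ : u ∉ Q) : residue ((∏ r ∈ R \ Q, (X - C r)) * p) R u = 0 := by
  simp [residue, eval_prod, prod_eq_zero (mem_sdiff.2 ⟨hu, huQ⟩) (sub_self u)]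

variable [LinearOrder K] [IsStrictOrderedRing K]

lemma residue_pos_iff {p : K[X]} {Q : Finset K} {u : K} :
    0 < residue p Q u ↔ 0 < (-1 : K) ^ #(Q.filter (u < ·)) * p.eval u := by
  have h := neg_one_pow_card_filter_lt_mul_prod_sub_pos (Q.erase u) (notMem_erase u Q)
  rw [card_filter_lt_erase] at h
  rw [residue, div_pos_iff, ← mul_pos_iff, mul_pos_iff_of_neg_one_pow_mul_pos h]

/-- Equivalently, `p / ∏_{r ∈ Q} (X - r) = ∑_{r ∈ Q} w_r / (X - r)` with all `w_r > 0`. -/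
def PosResiduesAt (p : K[X]) (Q : Finset K) : Prop :=
  p.natDegree < #Q ∧ ∀ u ∈ Q, 0 < residue p Q u

def PosResidueFrac (p q : K[X]) : Prop :=
  ∃ (Q : Finset K) (c : K), 0 < c ∧ q = C c * ∏ r ∈ Q, (X - C r) ∧ PosResiduesAt p Q

lemma PosResiduesAt.of_C_mul_eq_prod_sdiff_mul {p g : K[X]} {Q R : Finset K} {c : K}
    (hp : PosResiduesAt p Q) (hc : 0 < c) (hQR : Q ⊆ R)
    (hg : C c * g = (∏ r ∈ R \ Q, (X - C r)) * p) :
    g.natDegree < #R ∧ ∀ u ∈ R, 0 ≤ residue g R u ∧ (u ∈ Q → 0 < residue g R u) := by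
  refine ⟨?_, fun u hu => ?_⟩
  · rw [← natDegree_C_mul hc.ne', hg]
    refine natDegree_mul_le.trans_lt ?_
    rw [natDegree_finsetProd_X_sub_C_eq_card, card_sdiff_of_subset hQR]
    have := card_le_card hQR
    have := hp.1
    omega
  have hres : c * residue g R u = residue ((∏ r ∈ R \ Q, (X - C r)) * p) R u := by
    rw [← residue_C_mul, hg]
  by_cases huQ : u ∈ Q
  · rw [residue_prod_sdiff_mul_of_mem p hQR huQ] at hres
    have := (pos_iff_pos_of_mul_pos (hres ▸ hp.2 u huQ)).1 hc
    exact ⟨this.le, fun _ => this⟩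
  · rw [residue_prod_sdiff_mul_of_notMem p hu huQ, mul_eq_zero] at hres
    exact ⟨(hres.resolve_left hc.ne').ge, fun h => absurd h huQ⟩

end Residue

lemma natDegree_leadingCoeff_of_recurrence {K : Type*} [Field K] {R : Finset K} {D B : K[X]}
    {lam β : K} (hlam : lam ≠ 0) (hD : D.natDegree ≤ #R)
    (hB : C lam * B = (X - C β) * ∏ r ∈ R, (X - C r) - D) :
    B.natDegree = #R + 1 ∧ B.leadingCoeff = lam⁻¹ := by
  have hprod : (∏ r ∈ R, (X - C r)).Monic := monic_prod_of_monic _ _ fun r _ => monic_X_sub_C r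
  have hdeg : ((X - C β) * ∏ r ∈ R, (X - C r)).natDegree = #R + 1 := by
    rw [(monic_X_sub_C β).natDegree_mul hprod, natDegree_X_sub_C,
      natDegree_finsetProd_X_sub_C_eq_card, add_comm]
  have hlt : D.natDegree < ((X - C β) * ∏ r ∈ R, (X - C r)).natDegree := by omega
  have hB' : B = C lam⁻¹ * ((X - C β) * ∏ r ∈ R, (X - C r) - D) := by
    rw [← hB, ← mul_assoc, ← C_mul, inv_mul_cancel₀ hlam, C_1, one_mul]
  have hmonic := ((monic_X_sub_C β).mul hprod).sub_of_left (degree_lt_degree hlt)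
  rw [hB', natDegree_C_mul (inv_ne_zero hlam), natDegree_sub_eq_left_of_natDegree_lt hlt, hdeg,
    leadingCoeff_mul, leadingCoeff_C, hmonic.leadingCoeff, mul_one]
  exact ⟨rfl, rfl⟩

theorem posResidueFrac_of_recurrence {R : Finset ℝ} {D B : ℝ[X]} {lam β : ℝ} (hlam : 0 < lam)
    (hD : D.natDegree ≤ #R) (hres : ∀ u ∈ R, 0 < residue D R u)
    (hB : C lam * B = (X - C β) * ∏ r ∈ R, (X - C r) - D) :
    PosResidueFrac (∏ r ∈ R, (X - C r)) B := by
  obtain ⟨hBdeg, hBlc⟩ := natDegree_leadingCoeff_of_recurrence hlam.ne' hD hB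
  have hsign (u) (hu : u ∈ R) : 0 < (-1 : ℝ) ^ (#(R.filter (u < ·)) + 1) * B.eval u := by
    have hDu : D.eval u = lam * -B.eval u := by
      simpa [eval_prod, prod_eq_zero hu, neg_eq_iff_eq_neg] using (congrArg (eval u) hB).symm
    have hres_u := residue_pos_iff.1 (hres u hu)
    rw [hDu, mul_left_comm] at hres_u
    rw [pow_succ, mul_assoc, neg_one_mul]
    exact pos_of_mul_pos_right hres_u hlam.le
  obtain ⟨S, hS, hBS, hRS⟩ :=
    exists_interlacing_roots_of_sign_at_nodes hBdeg (hBlc ▸ inv_pos.2 hlam) hsign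
  refine ⟨S, lam⁻¹, inv_pos.2 hlam, hBlc ▸ hBS, by simp [hS], fun s hs => ?_⟩
  rw [residue_pos_iff, ← (hRS s hs).2]
  simpa [eval_prod] using neg_one_pow_card_filter_lt_mul_prod_sub_pos R (hRS s hs).1

lemma lcm_C_mul_prod_X_sub_C {K ι : Type*} [Field K] [DecidableEq K] (S : Finset ι)
    (Q : ι → Finset K) {c : ι → K} (hc : ∀ y ∈ S, c y ≠ 0) :
    (S.lcm fun y => C (c y) * ∏ r ∈ Q y, (X - C r)) = ∏ r ∈ S.biUnion Q, (X - C r) := by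
  have hdvd : (S.lcm fun y => C (c y) * ∏ r ∈ Q y, (X - C r)) ∣ ∏ r ∈ S.biUnion Q, (X - C r) :=
    Finset.lcm_dvd fun y hy =>
      (C_mul_dvd (hc y hy)).2 (prod_dvd_prod_of_subset _ _ _ (subset_biUnion_of_mem Q hy))
  have hdvd' : ∏ r ∈ S.biUnion Q, (X - C r) ∣ S.lcm fun y => C (c y) * ∏ r ∈ Q y, (X - C r) := by
    refine prod_dvd_of_coprime (fun a _ b _ hab => pairwise_coprime_X_sub_C
      Function.injective_id hab) fun r hr => ?_
    obtain ⟨y, hy, hr⟩ := mem_biUnion.1 hr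
    exact ((dvd_prod_of_mem _ hr).mul_left _).trans (dvd_lcm hy)
  calc _ = normalize (S.lcm fun y => C (c y) * ∏ r ∈ Q y, (X - C r)) := normalize_lcm.symm
    _ = normalize (∏ r ∈ S.biUnion Q, (X - C r)) := normalize_eq_normalize hdvd hdvd'
    _ = _ := (monic_prod_of_monic _ _ fun r _ => monic_X_sub_C r).normalize_eq_self

theorem PosResidueFrac.of_children {ι : Type*} {S : Finset ι} {p q g : ι → ℝ[X]} {μ : ι → ℝ}
    {A B : ℝ[X]} {lam β : ℝ} (hlam : 0 < lam) (hμ : ∀ y ∈ S, 0 < μ y)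
    (hpq : ∀ y ∈ S, PosResidueFrac (p y) (q y)) (hA : A = S.lcm q)
    (hg : ∀ y ∈ S, g y * q y = A * p y)
    (hB : C lam * B = (X - C β) * A - ∑ y ∈ S, C (μ y) * g y) : PosResidueFrac A B := by
  choose! Q c hc hq hpQ using hpq
  set R := S.biUnion Q
  have hQR (y) (hy : y ∈ S) : Q y ⊆ R := subset_biUnion_of_mem Q hy
  have hAR : A = ∏ r ∈ R, (X - C r) := by
    rw [hA, lcm_congr rfl hq, lcm_C_mul_prod_X_sub_C S Q fun y hy => (hc y hy).ne']
  have hcg (y) (hy : y ∈ S) : C (c y) * g y = (∏ r ∈ R \ Q y, (X - C r)) * p y := by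
    refine mul_right_cancel₀ (monic_prod_of_monic (Q y) _ fun r _ => monic_X_sub_C r).ne_zero ?_
    calc C (c y) * g y * ∏ r ∈ Q y, (X - C r) = g y * q y := by rw [hq y hy]; ring
      _ = A * p y := hg y hy
      _ = _ := by rw [hAR, ← prod_sdiff (hQR y hy)]; ring
  have hchild (y) (hy : y ∈ S) :=
    (hpQ y hy).of_C_mul_eq_prod_sdiff_mul (hc y hy) (hQR y hy) (hcg y hy)
  rw [hAR] at hB ⊢
  refine posResidueFrac_of_recurrence hlam ?_ (fun u hu => ?_) hB
  · exact natDegree_sum_le_of_forall_le _ _ fun y hy =>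
      (natDegree_C_mul_le _ _).trans (hchild y hy).1.le
  obtain ⟨y₀, hy₀, hu₀⟩ := mem_biUnion.1 hu
  rw [residue_sum]
  refine sum_pos' (fun y hy => ?_) ⟨y₀, hy₀, ?_⟩ <;> rw [residue_C_mul]
  · exact mul_nonneg (hμ y hy).le ((hchild y hy).2 u hu).1
  · exact mul_pos (hμ y₀ hy₀) (((hchild y₀ hy₀).2 u hu).2 hu₀)

lemma squarefree_C_mul_prod_X_sub_C {K : Type*} [Field K] {c : K} (hc : c ≠ 0) (Q : Finset K) :
    Squarefree (C c * ∏ r ∈ Q, (X - C r)) :=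
  (associated_unit_mul_left _ _ (isUnit_C.2 hc.isUnit)).squarefree_iff.2
    (separable_prod_X_sub_C_iff'.2 fun _ _ _ _ h => h).squarefree

lemma im_eq_zero_of_aeval_C_mul_prod_X_sub_C {c : ℝ} (hc : c ≠ 0) {Q : Finset ℝ} {z : ℂ}
    (h : aeval z (C c * ∏ r ∈ Q, (X - C r)) = 0) : z.im = 0 := by
  simp only [map_mul, aeval_C, map_prod, map_sub, aeval_X, mul_eq_zero, prod_eq_zero_iff,
    sub_eq_zero] at h
  rcases h with h | ⟨r, -, rfl⟩
  · simp [hc] at h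
  · simp

theorem PosResidueFrac.real_simple_interlacing {p q : ℝ[X]} (h : PosResidueFrac p q) :
    (∀ z : ℂ, aeval z p = 0 → z.im = 0) ∧ (∀ z : ℂ, aeval z q = 0 → z.im = 0) ∧
      Squarefree p ∧ Squarefree q ∧ q.natDegree = p.natDegree + 1 ∧
      ∃ s : Fin p.natDegree → ℝ, ∃ t : Fin (p.natDegree + 1) → ℝ,
        StrictMono s ∧ StrictMono t ∧ (∀ i, p.eval (s i) = 0) ∧ (∀ i, q.eval (t i) = 0) ∧
        ∀ i : Fin p.natDegree, t i.castSucc < s i ∧ s i < t i.succ := by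
  obtain ⟨Q, c, hc, rfl, hdeg, hres⟩ := h
  obtain ⟨N, hN⟩ : ∃ N, #Q = N + 1 := ⟨#Q - 1, by omega⟩
  obtain ⟨s, hs, hsQ, hp⟩ := exists_interlacing_factorization_of_alternating hN
    (fun u hu => residue_pos_iff.1 (hres u hu)) (by omega)
  have hlc : p.leadingCoeff ≠ 0 := by
    rintro h0
    obtain ⟨u, hu⟩ := card_pos.1 (by omega : 0 < #Q)
    simpa [leadingCoeff_eq_zero.1 h0, residue] using hres u hu
  have hpN : p.natDegree = N := by
    rw [hp, natDegree_C_mul hlc, natDegree_finsetProd_X_sub_C_eq_card,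
      card_image_of_injective _ hs.injective, card_univ, Fintype.card_fin]
  refine ⟨fun z hz => im_eq_zero_of_aeval_C_mul_prod_X_sub_C hlc (hp ▸ hz),
    fun z hz => im_eq_zero_of_aeval_C_mul_prod_X_sub_C hc.ne' hz,
    hp ▸ squarefree_C_mul_prod_X_sub_C hlc _, squarefree_C_mul_prod_X_sub_C hc.ne' Q, ?_, ?_⟩
  · rw [natDegree_C_mul hc.ne', natDegree_finsetProd_X_sub_C_eq_card, hN, hpN]
  rw [hpN]
  refine ⟨s, Q.orderEmbOfFin hN, hs, (Q.orderEmbOfFin hN).strictMono, fun i => (hsQ i).2,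
    fun i => ?_, fun i => (hsQ i).1⟩
  simp [eval_prod, prod_eq_zero (Q.orderEmbOfFin_mem hN i) (sub_self _)]

theorem stmt_13_general (T : JTree) (lam beta : T.V → ℝ) (hlam : ∀ t, 0 < lam t)
    (P : T.V → T.V → Polynomial ℝ)
    (hrec : ∀ x : T.V, Polynomial.C (lam x) * P x (T.parent x) =
      (Polynomial.X - Polynomial.C (beta x)) * P x x -
        ∑ y ∈ T.children x, Polynomial.C (lam y) * P x y)
    (hlcm : ∀ x : T.V, P x x = (T.children x).lcm fun y => P y x)
    (hdiv : ∀ x : T.V, ∀ y ∈ T.children x, P x y * P y x = P x x * P y y) :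
    ∀ x : T.V,
      (∀ z : ℂ, Polynomial.aeval z (P x x) = 0 → z.im = 0) ∧
      (∀ z : ℂ, Polynomial.aeval z (P x (T.parent x)) = 0 → z.im = 0) ∧
      Squarefree (P x x) ∧ Squarefree (P x (T.parent x)) ∧
      (P x (T.parent x)).natDegree = (P x x).natDegree + 1 ∧
      ∃ s : Fin (P x x).natDegree → ℝ, ∃ t : Fin ((P x x).natDegree + 1) → ℝ,
        StrictMono s ∧ StrictMono t ∧
        (∀ i, (P x x).eval (s i) = 0) ∧
        (∀ i, (P x (T.parent x)).eval (t i) = 0) ∧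
        (∀ i : Fin (P x x).natDegree, t i.castSucc < s i ∧ s i < t i.succ) := by
  intro x
  refine PosResidueFrac.real_simple_interlacing ?_
  induction hn : T.level x using Nat.strong_induction_on generalizing x with
  | _ n ih =>
    refine .of_children (hlam x) (fun y _ => hlam y) (fun y hy => ?_) (hlcm x) (hdiv x) (hrec x)
    have hyx := (T.mem_children x y).1 hy
    have := ih (T.level y) (by rw [← hn, ← hyx, T.level_parent]; omega) y rfl
    rwa [hyx] at this

/-- The tree polynomials `P x x` and `P x x'` (defined by the recursion
`λ_x P_{x,x'} = (z−β_x)P_{x,x} − Σ_{y∈N_x} λ_y P_{x,y}`, `P_{x,x} = lcm{P_{y,x}}`,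
`P_{x,y} P_{y,x} = P_{x,x} P_{y,y}`, with positive leading coefficients) have only
real, simple zeros, `deg P_{x,x'} = deg P_{x,x} + 1`, and the zeros of `P_{x,x}`
strictly interlace those of `P_{x,x'}`. -/
theorem stmt_13 (T : JTree) (lam beta : T.V → ℝ) (hlam : ∀ t, 0 < lam t)
    (P : T.V → T.V → Polynomial ℝ)
    (hlead : ∀ x : T.V, 0 < (P x x).leadingCoeff ∧ 0 < (P x (T.parent x)).leadingCoeff)
    (hrec : ∀ x : T.V, Polynomial.C (lam x) * P x (T.parent x) =
      (Polynomial.X - Polynomial.C (beta x)) * P x x -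
        ∑ y ∈ T.children x, Polynomial.C (lam y) * P x y)
    (hlcm : ∀ x : T.V, P x x = (T.children x).lcm fun y => P y x)
    (hdiv : ∀ x : T.V, ∀ y ∈ T.children x, P x y * P y x = P x x * P y y) :
    ∀ x : T.V,
      (∀ z : ℂ, Polynomial.aeval z (P x x) = 0 → z.im = 0) ∧
      (∀ z : ℂ, Polynomial.aeval z (P x (T.parent x)) = 0 → z.im = 0) ∧
      Squarefree (P x x) ∧ Squarefree (P x (T.parent x)) ∧
      (P x (T.parent x)).natDegree = (P x x).natDegree + 1 ∧
      ∃ s : Fin (P x x).natDegree → ℝ, ∃ t : Fin ((P x x).natDegree + 1) → ℝ,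
        StrictMono s ∧ StrictMono t ∧
        (∀ i, (P x x).eval (s i) = 0) ∧
        (∀ i, (P x (T.parent x)).eval (t i) = 0) ∧
        (∀ i : Fin (P x x).natDegree, t i.castSucc < s i ∧ s i < t i.succ) :=
  stmt_13_general T lam beta hlam P hrec hlcm hdiv
end
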